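/- arXiv:1004.2571 — 9 statements merged into one kernel-verified Lean document; each statement's English description precedes it below -/
import Mathlib

section
/- Let p and q be relatively prime positive integers with q < p, let m = ⌊p/q⌋ and c = p − mq (so 0 ≤ c < q). If c = 0 (equivalently q = 1), then S(q/p) = (m, m). If c > 0, then: (i) s_j(q/p) ∈ {m, m+1} for every 1 ≤ j ≤ 2q; (ii) s_1(q/p) = m+1; (iii) s_{2q}(q/p) = m; (iv) if q < 2c then there is no index j with 1 ≤ j ≤ 2q−1 such that s_j(q/p) = s_{j+1}(q/p) = m; (v) if 2c ≤ q then there is no index j with 1 ≤ j ≤ 2q−1 such that s_j(q/p) = s_{j+1}(q/p) = m+1. -/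
/-- `sSeq p q j` is the `j`-th term `s_j(q/p) = ⌊jp/q⌋_* − ⌊(j−1)p/q⌋_*` of the
S-sequence of slope `q/p`, where `⌊t⌋_* = ⌈t⌉ − 1`. -/
def sSeq (p q : ℕ) (j : ℤ) : ℤ :=
  ⌈((j : ℚ) * p / q)⌉ - ⌈(((j : ℚ) - 1) * p / q)⌉

lemma key (p q m c : ℕ) (hq : (q:ℚ) ≠ 0) (hp : (p:ℚ) = m*q + c) (j : ℤ) :
    sSeq p q j = m + (⌈((j:ℚ)*c/q)⌉ - ⌈(((j:ℚ)-1)*c/q)⌉) := by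
  unfold sSeq
  have h1 : (j:ℚ)*p/q = (j:ℚ)*c/q + ((j*m : ℤ):ℚ) := by
    rw [hp]; push_cast; field_simp; ring
  have h2 : ((j:ℚ)-1)*p/q = ((j:ℚ)-1)*c/q + (((j-1)*m : ℤ):ℚ) := by
    rw [hp]; push_cast; field_simp; ring
  rw [h1, h2, Int.ceil_add_intCast, Int.ceil_add_intCast]
  ring

theorem stmt1 (p q : ℕ) (hq : 0 < q) (hqp : q < p) (hpq : Nat.Coprime p q)
    (m c : ℕ) (hm : m = p / q) (hc : c = p - m * q) :
    (c = 0 →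
      List.ofFn (fun i : Fin (2 * q) => sSeq p q ((i : ℕ) + 1)) = [(m : ℤ), (m : ℤ)]) ∧
    (0 < c →
      (∀ j : ℤ, 1 ≤ j → j ≤ 2 * q → sSeq p q j = m ∨ sSeq p q j = m + 1) ∧
      sSeq p q 1 = m + 1 ∧
      sSeq p q (2 * q) = m ∧
      (q < 2 * c →
        ¬ ∃ j : ℤ, 1 ≤ j ∧ j ≤ 2 * q - 1 ∧ sSeq p q j = m ∧ sSeq p q (j + 1) = m) ∧
      (2 * c ≤ q →
        ¬ ∃ j : ℤ, 1 ≤ j ∧ j ≤ 2 * q - 1 ∧ sSeq p q j = m + 1 ∧ sSeq p q (j + 1) = m + 1)) := by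
  have hdm := Nat.div_add_mod p q
  have hcmod : c = p % q := by rw [hc, hm, Nat.mul_comm]; omega
  have hcq : c < q := by rw [hcmod]; exact Nat.mod_lt _ hq
  have hpmc : p = m * q + c := by rw [hm, Nat.mul_comm]; omega
  have hqQ : (q:ℚ) ≠ 0 := by positivity
  have hqQ0 : (0:ℚ) < q := by positivity
  have hpQ : (p:ℚ) = m*q + c := by rw [hpmc]; push_cast; ring
  have hkey := key p q m c hqQ hpQ
  constructor
  · -- c = 0 case
    intro hc0
    have hs : ∀ j : ℤ, sSeq p q j = m := by
      intro j
      rw [hkey j, hc0]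
      norm_num
    have hq1 : q = 1 := by
      have hdvd : q ∣ p := ⟨m, by rw [hpmc, hc0]; ring⟩
      exact Nat.Coprime.eq_one_of_dvd hpq.symm hdvd
    subst hq1
    simp [List.ofFn_succ, hs]
  · -- c > 0 case
    intro hc0
    have hcQ0 : (0:ℚ) < c := by exact_mod_cast hc0
    have hcQq : (c:ℚ) < q := by exact_mod_cast hcq
    have step_lb : ∀ j : ℤ, ⌈(((j:ℚ))-1)*c/q⌉ ≤ ⌈((j:ℚ))*c/q⌉ := by
      intro j
      apply Int.ceil_le_ceil
      apply div_le_div_of_nonneg_right ?_ hqQ0.le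
      nlinarith
    have step_ub : ∀ j : ℤ, ⌈((j:ℚ))*c/q⌉ ≤ ⌈(((j:ℚ))-1)*c/q⌉ + 1 := by
      intro j
      rw [Int.ceil_le]
      push_cast
      have h1 : (j:ℚ)*c/q = ((j:ℚ)-1)*c/q + c/q := by field_simp; ring
      have h2 : ((j:ℚ)-1)*c/q ≤ ⌈((j:ℚ)-1)*c/q⌉ := Int.le_ceil _
      have h3 : (c:ℚ)/q < 1 := by rw [div_lt_one hqQ0]; exact hcQq
      linarith
    refine ⟨?_, ?_, ?_, ?_, ?_⟩
    · intro j _ _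
      have := step_lb j
      have := step_ub j
      rw [hkey j]
      omega
    · rw [hkey 1]
      push_cast
      norm_num
      have h1 : ⌈(c:ℚ)/q⌉ ≤ 1 := by
        rw [Int.ceil_le]; push_cast
        rw [div_le_one hqQ0]; linarith
      have h2 : 1 ≤ ⌈(c:ℚ)/q⌉ := by
        rw [Int.le_ceil_iff]; push_cast
        have := div_pos hcQ0 hqQ0
        linarith
      omega
    · rw [hkey (2*q)]
      push_cast
      have e1 : ⌈2*(q:ℚ)*c/q⌉ = 2*(c:ℤ) := by
        have : 2*(q:ℚ)*c/q = ((2*c : ℤ):ℚ) := by push_cast; field_simp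
        rw [this, Int.ceil_intCast]
      have e2 : ⌈(2*(q:ℚ)-1)*c/q⌉ = 2*(c:ℤ) := by
        have harg : (2*(q:ℚ)-1)*c/q = -(c:ℚ)/q + ((2*c : ℤ):ℚ) := by
          push_cast; field_simp; ring
        rw [harg, Int.ceil_add_intCast]
        have h1 : ⌈-(c:ℚ)/q⌉ ≤ 0 := by
          rw [Int.ceil_le]; push_cast
          apply div_nonpos_of_nonpos_of_nonneg <;> linarith
        have h2 : 0 ≤ ⌈-(c:ℚ)/q⌉ := by
          rw [Int.le_ceil_iff]; push_cast
          rw [neg_div, lt_neg]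
          rw [neg_sub, div_lt_iff₀ hqQ0]
          nlinarith
        omega
      rw [e1, e2]
      ring
    · rintro h2c ⟨j, _, _, hj1, hj2⟩
      rw [hkey j] at hj1
      rw [hkey (j+1)] at hj2
      push_cast at hj2
      have e : ((j:ℚ)+1-1) = (j:ℚ) := by ring
      rw [e] at hj2
      have h1 : ⌈((j:ℚ))*c/q⌉ = ⌈(((j:ℚ))-1)*c/q⌉ := by omega
      have h2 : ⌈((j:ℚ)+1)*c/q⌉ = ⌈((j:ℚ))*c/q⌉ := by omega
      have hq2c : (q:ℚ) < 2*c := by exact_mod_cast h2c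
      have hgap : (((j:ℚ))-1)*c/q + 1 < ((j:ℚ)+1)*c/q := by
        have hlt1 : (1:ℚ) < 2*c/q := by rw [lt_div_iff₀ hqQ0]; linarith
        have e2 : ((j:ℚ)+1)*c/q = (((j:ℚ))-1)*c/q + 2*c/q := by field_simp; ring
        linarith
      have hlt : ⌈(((j:ℚ))-1)*c/q⌉ < ⌈((j:ℚ)+1)*c/q⌉ := by
        have hb : (⌈(((j:ℚ))-1)*c/q⌉ : ℚ) < (((j:ℚ))-1)*c/q + 1 := Int.ceil_lt_add_one _
        have ha : ((j:ℚ)+1)*c/q ≤ ⌈((j:ℚ)+1)*c/q⌉ := Int.le_ceil _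
        exact_mod_cast hb.trans (hgap.trans_le ha)
      omega
    · rintro h2c ⟨j, _, _, hj1, hj2⟩
      rw [hkey j] at hj1
      rw [hkey (j+1)] at hj2
      push_cast at hj2
      have e : ((j:ℚ)+1-1) = (j:ℚ) := by ring
      rw [e] at hj2
      have h1 : ⌈((j:ℚ))*c/q⌉ = ⌈(((j:ℚ))-1)*c/q⌉ + 1 := by omega
      have h2 : ⌈((j:ℚ)+1)*c/q⌉ = ⌈((j:ℚ))*c/q⌉ + 1 := by omega
      have hub : ⌈((j:ℚ)+1)*c/q⌉ ≤ ⌈(((j:ℚ))-1)*c/q⌉ + 1 := by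
        rw [Int.ceil_le]
        push_cast
        have e2 : ((j:ℚ)+1)*c/q = (((j:ℚ))-1)*c/q + 2*c/q := by field_simp; ring
        have hle : 2*(c:ℚ)/q ≤ 1 := by
          rw [div_le_one hqQ0]; exact_mod_cast h2c
        have := Int.le_ceil ((((j:ℚ))-1)*c/q)
        linarith
      omega
end

section
/- Let q and c be relatively prime integers with 0 < c < q and q < 2c, and for 1 ≤ ℓ ≤ 2(q−c) set t_ℓ = s_ℓ((q−c)/c) (note that q−c and c are relatively prime). Then the list (s_1(q/c), …, s_{2q}(q/c)) is equal to the concatenation, for ℓ running from 1 to 2(q−c), of the blocks consisting of t_ℓ copies of 1 followed by a single 0. In particular, s_j(q/c) = 0 if and only if j = ℓ + t_1 + t_2 + ⋯ + t_ℓ for some 1 ≤ ℓ ≤ 2(q−c). -/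
namespace Stmt5Aux

/-- floor of j(q-c)/q -/
def F (q c : ℕ) (j : ℤ) : ℤ := ⌊((j:ℚ) * (q - c : ℕ) / q)⌋
/-- ceil of l*q/(q-c) -/
def Cl (q c : ℕ) (l : ℤ) : ℤ := ⌈((l:ℚ) * q / (q - c : ℕ))⌉
/-- ceil of l*c/(q-c) -/
def G (q c : ℕ) (l : ℤ) : ℤ := ⌈((l:ℚ) * c / (q - c : ℕ))⌉

variable (q c : ℕ)

lemma ceil_key (hcq : c < q) (j : ℤ) :
    ⌈((j:ℚ) * c / q)⌉ = j - F q c j := by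
  have hq0 : (q:ℚ) ≠ 0 := Nat.cast_ne_zero.mpr (by omega)
  have h : ((j:ℚ) * c / q) = -((j:ℚ) * (q - c : ℕ) / q) + j := by
    rw [Nat.cast_sub hcq.le]
    field_simp
    ring
  rw [h, Int.ceil_add_intCast, Int.ceil_neg, F]
  ring

lemma sSeq_q_eq (hcq : c < q) (j : ℤ) :
    sSeq c q j = 1 - (F q c j - F q c (j-1)) := by
  unfold sSeq
  rw [show ((j:ℚ) - 1) = ((j - 1 : ℤ):ℚ) by push_cast; ring,
    ceil_key q c hcq j, ceil_key q c hcq (j-1)]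
  ring

lemma F_mono (hcq : c < q) {j j' : ℤ} (h : j ≤ j') : F q c j ≤ F q c j' := by
  apply Int.floor_le_floor
  have hq0 : (0:ℚ) < q := by exact_mod_cast (by omega : 0 < q)
  gcongr

lemma F_step (hcq : c < q) (j : ℤ) : F q c j ≤ F q c (j-1) + 1 := by
  have hq0 : (0:ℚ) < q := by exact_mod_cast (by omega : 0 < q)
  have hd : ((j:ℚ) * (q-c:ℕ) / q) - (((j-1:ℤ)):ℚ) * (q-c:ℕ)/q = (q-c:ℕ)/q := by
    push_cast
    field_simp
    ring
  have h2 : ((q-c:ℕ):ℚ)/q ≤ 1 := by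
    rw [div_le_one hq0]
    exact_mod_cast Nat.cast_le.mpr (Nat.sub_le q c)
  have key : ((j:ℚ) * (q-c:ℕ) / q) ≤ (((j-1:ℤ)):ℚ) * (q-c:ℕ)/q + 1 := by linarith
  have := Int.floor_le_floor key
  rwa [Int.floor_add_one] at this

lemma F_zero : F q c 0 = 0 := by simp [F]

lemma F_2q (hcq : c < q) : F q c (2*q) = 2*((q:ℤ)-c) := by
  have hq0 : (q:ℚ) ≠ 0 := Nat.cast_ne_zero.mpr (by omega)
  have h : ((2*(q:ℤ)):ℚ) * ((q-c:ℕ):ℚ) / (q:ℚ) = ((2*((q:ℤ)-c)):ℚ) := by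
    push_cast [Nat.cast_sub hcq.le]
    field_simp
  unfold F
  rw [show ((2*q : ℤ):ℚ) = ((2*(q:ℤ)):ℚ) by push_cast; ring, h]
  exact_mod_cast Int.floor_intCast (R := ℚ) (2*((q:ℤ)-c))

lemma F_ge_iff (hcq : c < q) (l j : ℤ) : l ≤ F q c j ↔ Cl q c l ≤ j := by
  have hq0 : (0:ℚ) < q := by exact_mod_cast (by omega : 0 < q)
  have hr0 : (0:ℚ) < ((q-c:ℕ):ℚ) := by exact_mod_cast (by omega : 0 < q - c)
  rw [F, Cl, Int.le_floor, Int.ceil_le, le_div_iff₀ hq0, div_le_iff₀ hr0]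

lemma Cl_mono (hcq : c < q) {l l' : ℤ} (h : l ≤ l') : Cl q c l ≤ Cl q c l' := by
  apply Int.ceil_le_ceil
  have hr0 : (0:ℚ) < ((q-c:ℕ):ℚ) := by exact_mod_cast (by omega : 0 < q - c)
  gcongr

lemma Cl_zero : Cl q c 0 = 0 := by
  unfold Cl
  norm_num

lemma Cl_2r (hcq : c < q) : Cl q c (2*((q:ℤ)-c)) = 2*q := by
  have hr0 : ((q-c:ℕ):ℚ) ≠ 0 := by
    exact_mod_cast Nat.cast_ne_zero.mpr (by omega : q - c ≠ 0)
  have hr0' : (q:ℚ) - (c:ℚ) ≠ 0 := by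
    have : (c:ℚ) < q := by exact_mod_cast hcq
    linarith
  have h : (((2*((q:ℤ)-c)) : ℤ):ℚ) * q / ((q-c:ℕ):ℚ) = ((2*(q:ℤ)):ℚ) := by
    push_cast [Nat.cast_sub hcq.le]
    field_simp
  unfold Cl
  rw [h]
  exact_mod_cast Int.ceil_intCast (R := ℚ) (2*(q:ℤ))


lemma sSeq_mem (hcq : c < q) (j : ℤ) : sSeq c q j = 0 ∨ sSeq c q j = 1 := by
  have h1 := sSeq_q_eq q c hcq j
  have h2 := F_mono q c hcq (show j - 1 ≤ j by omega)
  have h3 := F_step q c hcq j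
  omega

lemma zero_iff (hcq : c < q) (j : ℤ) (h1 : 1 ≤ j) (h2 : j ≤ 2*q) :
    sSeq c q j = 0 ↔ ∃ l : ℤ, 1 ≤ l ∧ l ≤ 2*((q:ℤ)-c) ∧ j = Cl q c l := by
  constructor
  · intro h0
    have hFF : F q c j = F q c (j-1) + 1 := by
      have := sSeq_q_eq q c hcq j
      omega
    refine ⟨F q c j, ?_, ?_, ?_⟩
    · have h4 := F_mono q c hcq (show (0:ℤ) ≤ j - 1 by omega)
      have h5 := F_zero q c
      omega
    · have h4 := F_mono q c hcq h2
      have h5 := F_2q q c hcq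
      omega
    · have h3 : Cl q c (F q c j) ≤ j := (F_ge_iff q c hcq (F q c j) j).mp le_rfl
      have h4 : ¬ (Cl q c (F q c j) ≤ j - 1) := by
        intro hcon
        have := (F_ge_iff q c hcq (F q c j) (j-1)).mpr hcon
        omega
      omega
  · rintro ⟨l, hl1, hl2, rfl⟩
    have hA : l ≤ F q c (Cl q c l) := (F_ge_iff q c hcq l (Cl q c l)).mpr le_rfl
    have hB : ¬ l ≤ F q c (Cl q c l - 1) := by
      intro h
      have := (F_ge_iff q c hcq l (Cl q c l - 1)).mp h
      omega
    have hC := F_step q c hcq (Cl q c l)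
    have hD := sSeq_q_eq q c hcq (Cl q c l)
    omega

lemma sSeq_r_eq (l : ℤ) : sSeq c (q-c) l = G q c l - G q c (l-1) := by
  unfold sSeq G
  rw [show ((l:ℚ) - 1) = ((l - 1 : ℤ):ℚ) by push_cast; ring]

lemma t_nonneg (hcq : c < q) (l : ℤ) : 0 ≤ sSeq c (q-c) l := by
  rw [sSeq_r_eq]
  have hr0 : (0:ℚ) < ((q-c:ℕ):ℚ) := by exact_mod_cast (by omega : 0 < q - c)
  have hml : (((l-1:ℤ)):ℚ) * c ≤ ((l:ℚ)) * c := by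
    have : (((l-1:ℤ)):ℚ) ≤ ((l:ℤ):ℚ) := by exact_mod_cast (by omega : l-1 ≤ l)
    have hc0 : (0:ℚ) ≤ (c:ℚ) := by positivity
    nlinarith
  have h : (((l-1:ℤ)):ℚ) * c / ((q-c:ℕ):ℚ) ≤ ((l:ℚ)) * c / ((q-c:ℕ):ℚ) :=
    (div_le_div_iff_of_pos_right hr0).mpr hml
  have := Int.ceil_le_ceil h
  unfold G
  omega

lemma Cl_eq (hcq : c < q) (l : ℤ) : Cl q c l = l + G q c l := by
  have hr0 : ((q-c:ℕ):ℚ) ≠ 0 := Nat.cast_ne_zero.mpr (by omega)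
  unfold Cl G
  have h : (l:ℚ) * q / ((q-c:ℕ):ℚ) = (l:ℚ)*c/((q-c:ℕ):ℚ) + l := by
    rw [Nat.cast_sub hcq.le] at hr0 ⊢
    field_simp
    ring
  rw [h, Int.ceil_add_intCast]
  ring

lemma sum_t (hcq : c < q) (n : ℕ) :
    ∑ h ∈ Finset.Icc 1 n, sSeq c (q-c) (h:ℤ) = G q c n := by
  induction n with
  | zero => simp [G]
  | succ n ih =>
    rw [Finset.sum_Icc_succ_top (by omega : 1 ≤ n+1), ih]
    rw [show (((n+1:ℕ)):ℤ) = (n:ℤ)+1 by push_cast; ring, sSeq_r_eq]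
    rw [show ((n:ℤ)+1-1) = (n:ℤ) by ring]
    ring

lemma Cl_succ (hcq : c < q) (n : ℤ) :
    Cl q c (n+1) = Cl q c n + sSeq c (q-c) (n+1) + 1 := by
  rw [Cl_eq q c hcq, Cl_eq q c hcq, sSeq_r_eq]
  rw [show ((n:ℤ)+1-1) = (n:ℤ) by ring]
  ring

/-- natural-number version of Cl -/
def Ct (q c : ℕ) (n : ℕ) : ℕ := (Cl q c n).toNat

lemma Cl_nonneg (hcq : c < q) (n : ℕ) : 0 ≤ Cl q c (n:ℤ) := by
  have h := Cl_mono q c hcq (show (0:ℤ) ≤ (n:ℤ) by positivity)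
  have := Cl_zero q c
  omega

lemma Ct_cast (hcq : c < q) (n : ℕ) : (Ct q c n : ℤ) = Cl q c n :=
  Int.toNat_of_nonneg (Cl_nonneg q c hcq n)

lemma Ct_succ (hcq : c < q) (n : ℕ) :
    Ct q c (n+1) = Ct q c n + ((sSeq c (q-c) ((n:ℤ)+1)).toNat + 1) := by
  have h1 := Cl_succ q c hcq (n:ℤ)
  have h2 := Ct_cast q c hcq n
  have h3 := Ct_cast q c hcq (n+1)
  have h4 := t_nonneg q c hcq ((n:ℤ)+1)
  have h5 : (((n+1:ℕ)):ℤ) = (n:ℤ)+1 := by push_cast; ring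
  rw [h5] at h3
  omega


lemma ones (hcq : c < q) (n : ℕ) (hn : n + 1 ≤ 2*(q-c)) (j : ℤ)
    (hjl : Cl q c (n:ℤ) < j) (hju : j < Cl q c ((n:ℤ)+1)) :
    sSeq c q j = 1 := by
  have h1 : 1 ≤ j := by
    have := Cl_nonneg q c hcq n
    omega
  have h2 : j ≤ 2*q := by
    have hm : Cl q c ((n:ℤ)+1) ≤ Cl q c (2*((q:ℤ)-c)) := by
      apply Cl_mono q c hcq
      omega
    have := Cl_2r q c hcq
    omega
  rcases sSeq_mem q c hcq j with h0 | h0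
  · exfalso
    obtain ⟨l, hl1, hl2, rfl⟩ := (zero_iff q c hcq j h1 h2).mp h0
    rcases le_or_gt l n with hl | hl
    · have := Cl_mono q c hcq hl
      omega
    · have := Cl_mono q c hcq (show (n:ℤ)+1 ≤ l by omega)
      omega
  · exact h0

lemma main (hcq : c < q) (n : ℕ) (hn : n ≤ 2*(q-c)) :
    List.ofFn (fun i : Fin (Ct q c n) => sSeq c q ((i:ℕ) + 1)) =
      (List.range n).flatMap
        (fun ℓ => List.replicate (sSeq c (q - c) ((ℓ:ℤ) + 1)).toNat (1 : ℤ) ++ [(0 : ℤ)]) := by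
  induction n with
  | zero =>
    have : Ct q c 0 = 0 := by
      unfold Ct
      rw [show ((0:ℕ):ℤ) = (0:ℤ) by norm_num, Cl_zero]
      rfl
    rw [this]
    simp
  | succ n ih =>
    have hn' : n ≤ 2*(q-c) := by omega
    have ht0 := t_nonneg q c hcq ((n:ℤ)+1)
    have hC : Ct q c (n+1) = Ct q c n + ((sSeq c (q-c) ((n:ℤ)+1)).toNat + 1) :=
      Ct_succ q c hcq n
    have hClsucc := Cl_succ q c hcq (n:ℤ)
    have hCt := Ct_cast q c hcq n
    rw [List.range_succ, show ((List.range n ++ [n] : List ℕ) >>= fun a => pure (a:ℤ)) = ((List.range n >>= fun a => pure (a:ℤ)) ++ [(n:ℤ)]) by simp, List.flatMap_append, ← ih hn', hC, List.ofFn_add]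
    congr 1
    simp only [List.flatMap_cons, List.flatMap_nil, List.append_nil]
    rw [List.ofFn_add]
    congr 1
    · have hfun : (fun i : Fin (sSeq c (q-c) ((n:ℤ)+1)).toNat =>
          sSeq c q ((((Fin.natAdd (Ct q c n) (Fin.castAdd 1 i)) : ℕ):ℤ) + 1))
          = fun _ => (1:ℤ) := by
        funext i
        have hi : (i:ℕ) < (sSeq c (q-c) ((n:ℤ)+1)).toNat := i.isLt
        apply ones q c hcq n hn
        · simp only [Fin.coe_natAdd, Fin.coe_castAdd]
          push_cast
          omega
        · simp only [Fin.coe_natAdd, Fin.coe_castAdd]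
          push_cast
          omega
      exact (congrArg List.ofFn hfun).trans (List.ofFn_const _ _)
    · have hz : sSeq c q ((((Fin.natAdd (Ct q c n)
          (Fin.natAdd (sSeq c (q-c) ((n:ℤ)+1)).toNat (0 : Fin 1))) : ℕ):ℤ) + 1) = 0 := by
        have hm : Cl q c ((n:ℤ)+1) ≤ Cl q c (2*((q:ℤ)-c)) := by
          apply Cl_mono q c hcq
          omega
        have h2r := Cl_2r q c hcq
        apply (zero_iff q c hcq _ ?_ ?_).mpr
        · refine ⟨(n:ℤ)+1, by omega, by omega, ?_⟩
          simp only [Fin.coe_natAdd, Fin.val_eq_zero]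
          push_cast
          omega
        · simp only [Fin.coe_natAdd, Fin.val_eq_zero]
          push_cast
          omega
        · simp only [Fin.coe_natAdd, Fin.val_eq_zero]
          push_cast
          omega
      simp only [List.ofFn_succ, List.ofFn_zero]
      rw [hz]
end Stmt5Aux

theorem stmt5 (q c : ℕ) (hc : 0 < c) (hcq : c < q) (hq2c : q < 2 * c)
    (hqc : Nat.Coprime q c) :
    List.ofFn (fun i : Fin (2 * q) => sSeq c q ((i : ℕ) + 1)) =
      (List.range (2 * (q - c))).flatMap
        (fun ℓ => List.replicate (sSeq c (q - c) ((ℓ : ℤ) + 1)).toNat (1 : ℤ) ++ [(0 : ℤ)]) ∧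
    (∀ j : ℤ, 1 ≤ j → j ≤ 2 * q →
      (sSeq c q j = 0 ↔
        ∃ ℓ : ℕ, 1 ≤ ℓ ∧ ℓ ≤ 2 * (q - c) ∧
          j = (ℓ : ℤ) + ∑ h ∈ Finset.Icc 1 ℓ, sSeq c (q - c) (h : ℤ))) := by
  open Stmt5Aux in
  constructor
  · have h2q : Ct q c (2*(q-c)) = 2*q := by
      have h1 := Cl_2r q c hcq
      have h2 := Ct_cast q c hcq (2*(q-c))
      have h3 : ((2*(q-c) : ℕ):ℤ) = 2*((q:ℤ)-c) := by omega
      rw [h3] at h2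
      omega
    have := main q c hcq (2*(q-c)) le_rfl
    rw [h2q] at this
    exact this
  · intro j hj1 hj2
    rw [Stmt5Aux.zero_iff q c hcq j hj1 hj2]
    constructor
    · rintro ⟨l, hl1, hl2, rfl⟩
      refine ⟨l.toNat, by omega, by omega, ?_⟩
      rw [sum_t q c hcq l.toNat, show ((l.toNat:ℕ):ℤ) = l by omega,
        ← Cl_eq q c hcq l]
    · rintro ⟨l, hl1, hl2, rfl⟩
      refine ⟨(l:ℤ), by omega, by omega, ?_⟩
      rw [sum_t q c hcq l, ← Cl_eq q c hcq (l:ℤ)]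
end

section
/- Let q and c be relatively prime integers with 0 < c < q. Then for every integer i with 1 ≤ i ≤ 2q, s_i(q/(q−c)) + s_{q+1−i}(q/c) = 1. Consequently, the list (s_1(q/c), …, s_{2q}(q/c)) is obtained from the list (s_1(q/(q−c)), …, s_{2q}(q/(q−c))) by reversing the order and interchanging the values 0 and 1. -/
lemma ceil_int_sub (n : ℤ) (a : ℚ) : ⌈(n : ℚ) - a⌉ = n - ⌊a⌋ := by
  rw [show (n : ℚ) - a = -(a - n) by ring, Int.ceil_neg, Int.floor_sub_intCast]
  ring

lemma key_s6 (q c : ℕ) (hq : 0 < q) (hcq : c ≤ q) (i : ℤ) :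
    sSeq (q - c) q i + sSeq c q ((q : ℤ) + 1 - i) = 1 := by
  have hq' : (q : ℚ) ≠ 0 := Nat.cast_ne_zero.mpr hq.ne'
  unfold sSeq
  have hqc : ((q - c : ℕ) : ℚ) = (q : ℚ) - c := by
    push_cast [hcq]; ring
  have e1 : (i : ℚ) * ((q - c : ℕ) : ℚ) / q = (i : ℚ) - (i : ℚ) * c / q := by
    rw [hqc]; field_simp
  have e2 : ((i : ℚ) - 1) * ((q - c : ℕ) : ℚ) / q
      = ((i - 1 : ℤ) : ℚ) - ((i : ℚ) - 1) * c / q := by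
    rw [hqc]; push_cast; field_simp
  have e3 : (((q : ℤ) + 1 - i : ℤ) : ℚ) * c / q = (1 - (i : ℚ)) * c / q + ((c : ℤ) : ℚ) := by
    push_cast; field_simp; ring
  have e4 : ((((q : ℤ) + 1 - i : ℤ) : ℚ) - 1) * c / q = (-(i : ℚ)) * c / q + ((c : ℤ) : ℚ) := by
    push_cast; field_simp; ring
  rw [e1, e2, e3, e4, ceil_int_sub, ceil_int_sub, Int.ceil_add_intCast, Int.ceil_add_intCast]
  have f1 : ⌈(1 - (i : ℚ)) * c / q⌉ = -⌊((i : ℚ) - 1) * c / q⌋ := by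
    rw [show (1 - (i : ℚ)) * c / q = -(((i : ℚ) - 1) * c / q) by ring, Int.ceil_neg]
  have f2 : ⌈(-(i : ℚ)) * c / q⌉ = -⌊(i : ℚ) * c / q⌋ := by
    rw [show (-(i : ℚ)) * c / q = -((i : ℚ) * c / q) by ring, Int.ceil_neg]
  rw [f1, f2]
  ring

lemma period (p q : ℕ) (hq : 0 < q) (j : ℤ) : sSeq p q (j + q) = sSeq p q j := by
  have hq' : (q : ℚ) ≠ 0 := Nat.cast_ne_zero.mpr hq.ne'
  unfold sSeq
  have e1 : ((j + (q : ℤ) : ℤ) : ℚ) * p / q = (j : ℚ) * p / q + ((p : ℤ) : ℚ) := by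
    push_cast; field_simp
  have e2 : (((j + (q : ℤ) : ℤ) : ℚ) - 1) * p / q = ((j : ℚ) - 1) * p / q + ((p : ℤ) : ℚ) := by
    push_cast; field_simp; ring
  rw [e1, e2, Int.ceil_add_intCast, Int.ceil_add_intCast]
  ring

theorem stmt6 (q c : ℕ) (hc : 0 < c) (hcq : c < q) (hqc : Nat.Coprime q c) :
    (∀ i : ℤ, 1 ≤ i → i ≤ 2 * q → sSeq (q - c) q i + sSeq c q ((q : ℤ) + 1 - i) = 1) ∧
    List.ofFn (fun i : Fin (2 * q) => sSeq c q ((i : ℕ) + 1)) =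
      ((List.ofFn (fun i : Fin (2 * q) => sSeq (q - c) q ((i : ℕ) + 1))).map
        (fun x => 1 - x)).reverse := by
  have hq : 0 < q := hc.trans hcq
  constructor
  · intro i _ _; exact key_s6 q c hq hcq.le i
  · apply List.ext_getElem
    · simp
    · intro n h1 h2
      simp only [List.length_ofFn] at h1
      simp only [List.getElem_ofFn, List.getElem_reverse, List.getElem_map, List.length_map,
        List.length_ofFn]
      have hk := key_s6 q c hq hcq.le ((q : ℤ) - n)
      have hper := period (q - c) q hq ((q : ℤ) - n)
      have harg : (q : ℤ) + 1 - ((q : ℤ) - n) = (n : ℤ) + 1 := by ring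
      rw [harg] at hk
      have harg2 : ((2 * q - 1 - n : ℕ) : ℤ) + 1 = ((q : ℤ) - n) + q := by
        have : n + 1 ≤ 2 * q := h1
        omega
      rw [harg2, hper]
      omega
end

section
/- Let q and c be relatively prime integers with 0 < c < q and 2c < q. Then the list of lengths of the maximal blocks of consecutive 0's in the list (s_1(q/c), …, s_{2q}(q/c)) is the reverse of the list of lengths of the maximal blocks of consecutive 1's in the list (s_1(q/(q−c)), …, s_{2q}(q/(q−c))). -/
/-- The list of lengths of the maximal blocks of consecutive occurrences of the
value `v` in the list `L`: split `L` at every entry different from `v`,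
discard the empty chunks, and record the lengths of the remaining chunks. -/
def blockLengths (v : ℤ) (L : List ℤ) : List ℕ :=
  ((L.splitOnP (fun x => x ≠ v)).filter (fun l => !l.isEmpty)).map List.length

open List

theorem modifyHead_append_left' {α : Type*} (f : α → α) (l l' : List α) (h : l ≠ []) :
    (l ++ l').modifyHead f = l.modifyHead f ++ l' := by
  cases l with
  | nil => exact absurd rfl h
  | cons a t => simp

theorem splitOnP_map' {α β : Type*} (p : β → Bool) (f : α → β) (l : List α) :
    (l.map f).splitOnP p = (l.splitOnP (fun a => p (f a))).map (List.map f) := by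
  induction l with
  | nil => simp [splitOnP_nil]
  | cons a l ih =>
    rw [map_cons, splitOnP_cons, splitOnP_cons, ih]
    by_cases h : p (f a)
    · simp [h]
    · simp only [h, if_false]
      cases hS : (l.splitOnP (fun a => p (f a))) with
      | nil => exact absurd hS (splitOnP_ne_nil _ _)
      | cons s S => simp

theorem splitOnP_concat' {α : Type*} (p : α → Bool) (a : α) (xs : List α) :
    (xs ++ [a]).splitOnP p =
      if p a then xs.splitOnP p ++ [[]]
      else (((xs.splitOnP p).reverse.modifyHead (· ++ [a]))).reverse := by
  induction xs with
  | nil =>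
    simp only [nil_append, splitOnP_cons, splitOnP_nil]
    by_cases h : p a <;> simp [h]
  | cons x xs ih =>
    rw [cons_append, splitOnP_cons, splitOnP_cons, ih]
    have hnn := splitOnP_ne_nil p xs
    by_cases hx : p x <;> by_cases ha : p a <;>
      simp only [hx, ha, if_true, if_false]
    · rfl
    · rw [reverse_cons, modifyHead_append_left' _ _ _ (by simpa using hnn)]
      simp
    · cases hS : xs.splitOnP p with
      | nil => exact absurd hS hnn
      | cons s S => simp
    · cases hS : xs.splitOnP p with
      | nil => exact absurd hS hnn
      | cons s S =>
        cases S with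
        | nil => simp
        | cons t S' =>
          simp only [Bool.false_eq_true, if_false]
          have h1 : (s :: t :: S').reverse = (S'.reverse ++ [t]) ++ [s] := by simp
          have h2 : ((x :: s) :: t :: S').reverse = (S'.reverse ++ [t]) ++ [x :: s] := by simp
          rw [modifyHead_cons, h2, h1,
              modifyHead_append_left' _ (S'.reverse ++ [t]) [s] (by simp),
              modifyHead_append_left' _ (S'.reverse ++ [t]) [x :: s] (by simp)]
          simp

theorem splitOnP_reverse' {α : Type*} (p : α → Bool) (l : List α) :
    l.reverse.splitOnP p = ((l.splitOnP p).map List.reverse).reverse := by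
  induction l with
  | nil => simp [splitOnP_nil]
  | cons a l ih =>
    rw [reverse_cons, splitOnP_concat', ih, splitOnP_cons]
    by_cases h : p a
    · simp [h]
    · simp only [h, if_false]
      cases hS : l.splitOnP p with
      | nil => exact absurd hS (splitOnP_ne_nil _ _)
      | cons s S => simp

theorem blockLengths_reverse (v : ℤ) (l : List ℤ) :
    blockLengths v l.reverse = (blockLengths v l).reverse := by
  unfold blockLengths
  rw [splitOnP_reverse', List.filter_reverse, List.map_reverse, List.filter_map]
  congr 1
  rw [List.map_map]
  have h0 : ((fun l : List ℤ => !l.isEmpty) ∘ List.reverse) = (fun l : List ℤ => !l.isEmpty) := by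
    funext x; cases x <;> simp
  rw [h0]
  have h1 : (List.length ∘ List.reverse : List ℤ → ℕ) = List.length := by
    funext x; simp
  rw [h1]

theorem blockLengths_map_one_sub (l : List ℤ) :
    blockLengths 0 (l.map (fun x => 1 - x)) = blockLengths 1 l := by
  unfold blockLengths
  rw [splitOnP_map', List.filter_map, List.map_map]
  have h1 : (fun a : ℤ => (decide ¬1 - a = 0 : Bool)) = (fun a : ℤ => decide ¬a = 1) := by
    funext a
    apply decide_eq_decide.mpr
    omega
  have h2 : ((fun l : List ℤ => !l.isEmpty) ∘ List.map fun x => 1 - x) =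
      (fun l : List ℤ => !l.isEmpty) := by funext x; cases x <;> simp
  rw [h1, h2]
  have h3 : (List.length ∘ List.map (fun x : ℤ => 1 - x)) = List.length := by
    funext x; simp
  rw [h3]

theorem ceil_help (q c : ℕ) (hq : (q:ℚ) ≠ 0) (x : ℚ) (n : ℤ) :
    ⌈((n:ℚ) * q - x) * c / q⌉ = n * c - ⌊x * c / q⌋ := by
  rw [show ((n:ℚ) * q - x) * c / q = -(x * c / q) + ((n * c : ℤ) : ℚ) by
    push_cast; field_simp; ring, Int.ceil_add_intCast, Int.ceil_neg]
  push_cast; ring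

theorem ceil_help2 (q c : ℕ) (hq : (q:ℚ) ≠ 0) (hcq : c ≤ q) (x : ℚ) (m : ℤ) (hx : x = (m:ℚ)) :
    ⌈x * ((q - c : ℕ):ℚ) / q⌉ = m - ⌊x * c / q⌋ := by
  subst hx
  rw [show (m:ℚ) * ((q - c : ℕ):ℚ) / q = -((m:ℚ) * c / q) + (m:ℤ) by
    rw [Nat.cast_sub hcq]; field_simp; ring, Int.ceil_add_intCast, Int.ceil_neg]
  ring

theorem sSeq_symm (q c : ℕ) (hq : 0 < q) (hcq : c ≤ q) (j : ℤ) :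
    sSeq c q (2 * q + 1 - j) = 1 - sSeq (q - c) q j := by
  have hq' : (q:ℚ) ≠ 0 := Nat.cast_ne_zero.mpr hq.ne'
  unfold sSeq
  have e1 : ((2 * (q:ℤ) + 1 - j : ℤ) : ℚ) = (2:ℤ) * (q:ℚ) - ((j:ℚ) - 1) := by push_cast; ring
  have e2 : (2:ℤ) * (q:ℚ) - ((j:ℚ) - 1) - 1 = (2:ℤ) * (q:ℚ) - (j:ℚ) := by push_cast; ring
  rw [e1, e2, ceil_help q c hq' ((j:ℚ) - 1) 2, ceil_help q c hq' (j:ℚ) 2,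
      ceil_help2 q c hq' hcq (j:ℚ) j rfl,
      ceil_help2 q c hq' hcq ((j:ℚ) - 1) (j-1) (by push_cast; ring)]
  ring

theorem stmt7 (q c : ℕ) (hc : 0 < c) (hcq : c < q) (h2c : 2 * c < q)
    (hqc : Nat.Coprime q c) :
    blockLengths 0 (List.ofFn (fun i : Fin (2 * q) => sSeq c q ((i : ℕ) + 1))) =
      (blockLengths 1
        (List.ofFn (fun i : Fin (2 * q) => sSeq (q - c) q ((i : ℕ) + 1)))).reverse := by
  have hq : 0 < q := hc.trans hcq
  have hL : List.ofFn (fun i : Fin (2 * q) => sSeq c q ((i : ℕ) + 1)) =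
      ((List.ofFn (fun i : Fin (2 * q) => sSeq (q - c) q ((i : ℕ) + 1))).map
        (fun x => 1 - x)).reverse := by
    apply List.ext_getElem
    · simp
    · intro i h1 h2
      simp only [List.getElem_reverse, List.getElem_map, List.getElem_ofFn]
      have hi : i < 2 * q := by simpa using h1
      have hlen : (((List.ofFn (fun i : Fin (2 * q) => sSeq (q - c) q ((i : ℕ) + 1))).map
          (fun x => 1 - x)).length) = 2 * q := by simp
      have key := sSeq_symm q c hq hcq.le (((2 * q - 1 - i : ℕ) : ℤ) + 1)
      have harg : 2 * (q:ℤ) + 1 - (((2 * q - 1 - i : ℕ) : ℤ) + 1) = (i : ℤ) + 1 := by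
        omega
      rw [harg] at key
      rw [key]
      congr 2
      omega
  rw [hL, blockLengths_reverse, blockLengths_map_one_sub]
end

section
/- Let α be any type and let z_1, z_2 be elements of the free group on α. If z_2 · z_1 = (z_1 · z_2)^{−1}, then z_1 · z_2 = 1. In particular, the inverse of a nontrivial element of a free group is never obtained from it by a cyclic permutation. -/
namespace Stmt10Aux

open FreeGroup List

variable {α : Type*}

/-- the "no cancellation" relation between adjacent letters -/
def Rd (a b : α × Bool) : Prop := b ≠ (a.1, !a.2)

lemma rd_self (a : α × Bool) : Rd a a := by
  intro h
  have := congrArg Prod.snd h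
  simp at this

lemma invRev_cons (a : α × Bool) (L : List (α × Bool)) :
    invRev (a :: L) = invRev L ++ [(a.1, !a.2)] := by
  simp [invRev]

lemma invRev_append' (L M : List (α × Bool)) :
    invRev (L ++ M) = invRev M ++ invRev L := by
  simp [invRev]

lemma invRev_ne_nil {L : List (α × Bool)} (h : L ≠ []) : invRev L ≠ [] := by
  simp [invRev, h]

lemma noStep {L L' : List (α × Bool)} (h : List.Chain' Rd L) : ¬ Red.Step L L' := by
  intro s
  cases s with
  | @not L₁ L₂ x b =>
    unfold List.Chain' at h
    rw [List.isChain_append] at h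
    have h2 := h.2.1
    rw [List.isChain_cons_cons] at h2
    exact h2.1 rfl

lemma reduce_eq_self [DecidableEq α] {L : List (α × Bool)} (h : List.Chain' Rd L) :
    reduce L = L := by
  have hr : Relation.ReflTransGen Red.Step L (reduce L) := FreeGroup.reduce.red
  rcases Relation.ReflTransGen.cases_head hr with h1 | ⟨c, hc, _⟩
  · exact h1.symm
  · exact absurd hc (noStep h)

lemma chain'_of_not_ex : ∀ {M : List (α × Bool)},
    (∀ (L₁ L₂ : List (α × Bool)) (x : α) (b : Bool), M ≠ L₁ ++ (x, b) :: (x, !b) :: L₂) →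
    List.Chain' Rd M
  | [], _ => List.isChain_nil
  | [a], _ => List.isChain_singleton a
  | a :: b :: T, h => by
    unfold List.Chain'
    rw [List.isChain_cons_cons]
    refine ⟨fun hb => ?_, chain'_of_not_ex fun L₁ L₂ x bb hEq => ?_⟩
    · exact h [] T a.1 a.2 (by rw [hb]; simp)
    · exact h (a :: L₁) L₂ x bb (by rw [hEq]; rfl)

lemma chain'_reduce [DecidableEq α] (L : List (α × Bool)) : List.Chain' Rd (reduce L) :=
  chain'_of_not_ex fun _ _ _ _ hEq => FreeGroup.reduce.not hEq

lemma chain'_toWord [DecidableEq α] (x : FreeGroup α) : List.Chain' Rd x.toWord := by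
  rw [← FreeGroup.reduce_toWord x]
  exact chain'_reduce _

/-- cyclic decomposition of a reduced word -/
lemma decomp : ∀ (n : ℕ) (L : List (α × Bool)), L.length ≤ n → List.Chain' Rd L →
    ∃ p c, L = p ++ c ++ invRev p ∧ (∀ x ∈ c.getLast?, ∀ y ∈ c.head?, Rd x y)
  | 0, L, hlen, _ => by
    have : L = [] := List.eq_nil_of_length_eq_zero (Nat.le_zero.mp hlen)
    exact ⟨[], [], by simp [this, invRev], by simp⟩
  | n + 1, L, hlen, h => by
    by_cases hcyc : ∀ x ∈ L.getLast?, ∀ y ∈ L.head?, Rd x y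
    · exact ⟨[], L, by simp [invRev], hcyc⟩
    · push_neg at hcyc
      obtain ⟨z, hz, a, ha, hr⟩ := hcyc
      rcases L with _ | ⟨a', T⟩
      · simp at hz
      · simp only [List.head?_cons, Option.mem_some_iff] at ha
        subst ha
        rcases List.eq_nil_or_concat' T with rfl | ⟨M, w, rfl⟩
        · simp only [List.getLast?_singleton, Option.mem_some_iff] at hz
          subst hz
          exact absurd (rd_self a') hr
        · have hzw : z = w := by
            have h0 : a' :: (M ++ [w]) = (a' :: M) ++ [w] := by simp
            rw [h0, List.getLast?_concat] at hz
            exact (Option.mem_some_iff.mp hz).symm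
          subst hzw
          have hw : z = (a'.1, !a'.2) := by
            simp only [Rd, not_not] at hr
            have h1 : z.1 = a'.1 := congrArg Prod.fst hr |>.symm
            have h2 : a'.2 = !z.2 := congrArg Prod.snd hr
            have h3 : z.2 = !a'.2 := by rw [h2]; simp
            rw [← h1, ← h3]
          have hM : List.Chain' Rd M := by
            have : M <:+: a' :: (M ++ [z]) := ⟨[a'], [z], by simp⟩
            exact h.infix this
          have hMlen : M.length ≤ n := by
            simp only [List.length_cons, List.length_append, List.length_singleton] at hlen
            omega
          obtain ⟨q, c, hMeq, hc⟩ := decomp n M hMlen hM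
          refine ⟨a' :: q, c, ?_, hc⟩
          rw [invRev_cons, hMeq, hw]
          simp

lemma red_invRev_self : ∀ p : List (α × Bool), Red (invRev p ++ p) []
  | [] => by simp [invRev]; exact Relation.ReflTransGen.refl
  | a :: q => by
    have key : invRev (a :: q) ++ (a :: q)
        = invRev q ++ (a.1, !a.2) :: (a.1, a.2) :: q := by
      rw [invRev_cons]; simp
    have s : Red.Step (invRev q ++ (a.1, !a.2) :: (a.1, a.2) :: q) (invRev q ++ q) :=
      Red.Step.not_rev
    rw [key]
    exact Relation.ReflTransGen.head s (red_invRev_self q)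

/-- if p ++ invRev p is reduced then p = [] -/
lemma nil_of_chain'_mul_inv {p : List (α × Bool)}
    (h : List.Chain' Rd (p ++ invRev p)) : p = [] := by
  rcases List.eq_nil_or_concat' p with rfl | ⟨P, a, rfl⟩
  · rfl
  · exfalso
    have hshape : (P ++ [a]) ++ invRev (P ++ [a])
        = P ++ (a.1, a.2) :: (a.1, !a.2) :: invRev P := by
      rw [invRev_append']
      simp [invRev]
    rw [hshape] at h
    exact noStep h Red.Step.not

/-- chain' of the reduced square -/
lemma chain'_sq {p c : List (α × Bool)}
    (h : List.Chain' Rd (p ++ c ++ invRev p)) (hc : c ≠ [])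
    (hcyc : ∀ x ∈ c.getLast?, ∀ y ∈ c.head?, Rd x y) :
    List.Chain' Rd (p ++ (c ++ c) ++ invRev p) := by
  unfold List.Chain' at h ⊢
  rw [List.append_assoc, List.isChain_append] at h
  obtain ⟨hp, hci, hjp⟩ := h
  rw [List.isChain_append] at hci
  obtain ⟨hcc, hinv, hjci⟩ := hci
  obtain ⟨hd, tl, rfl⟩ := List.exists_cons_of_ne_nil hc
  rw [List.append_assoc, List.isChain_append]
  refine ⟨hp, ?_, ?_⟩
  · rw [List.append_assoc, List.isChain_append]
    refine ⟨hcc, List.isChain_append.mpr ⟨hcc, hinv, hjci⟩, ?_⟩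
    intro x hx y hy
    simp only [List.cons_append, List.head?_cons, Option.mem_some_iff] at hy
    subst hy
    exact hcyc x hx hd (by simp)
  · intro x hx y hy
    apply hjp x hx
    simpa using hy

lemma reduce_sq [DecidableEq α] {p c : List (α × Bool)}
    (h : List.Chain' Rd (p ++ c ++ invRev p)) (hc : c ≠ [])
    (hcyc : ∀ x ∈ c.getLast?, ∀ y ∈ c.head?, Rd x y) :
    reduce ((p ++ c ++ invRev p) ++ (p ++ c ++ invRev p)) = p ++ (c ++ c) ++ invRev p := by
  have hred : Red ((p ++ c ++ invRev p) ++ (p ++ c ++ invRev p))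
      (p ++ (c ++ c) ++ invRev p) := by
    have key : Red ((p ++ c) ++ ((invRev p ++ p) ++ (c ++ invRev p)))
        ((p ++ c) ++ ([] ++ (c ++ invRev p))) :=
      Red.append_append Red.refl (Red.append_append (red_invRev_self p) Red.refl)
    simpa [List.append_assoc] using key
  rw [FreeGroup.reduce.eq_of_red hred]
  exact reduce_eq_self (chain'_sq h hc hcyc)

lemma decomp_unique {p q c d : List (α × Bool)} (hle : p.length ≤ q.length)
    (hEq : p ++ c ++ invRev p = q ++ d ++ invRev q)
    (hcyc : ∀ x ∈ c.getLast?, ∀ y ∈ c.head?, Rd x y) : p = q := by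
  have hpre : p <+: q := by
    have h1 : p <+: q ++ d ++ invRev q := hEq ▸ ⟨c ++ invRev p, by simp⟩
    have h2 : q <+: q ++ d ++ invRev q := ⟨d ++ invRev q, by simp⟩
    exact List.prefix_of_prefix_length_le h1 h2 hle
  obtain ⟨r, rfl⟩ := hpre
  rcases eq_or_ne r [] with rfl | hr
  · simp
  exfalso
  have hc' : c = r ++ d ++ invRev r := by
    have e1 : p ++ (c ++ invRev p) = p ++ (((r ++ d ++ invRev r)) ++ invRev p) := by
      simpa [invRev_append', List.append_assoc] using hEq
    exact List.append_cancel_right (List.append_cancel_left e1)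
  obtain ⟨a, r', rfl⟩ := List.exists_cons_of_ne_nil hr
  have hhead : c.head? = some a := by rw [hc']; simp
  have hlast : c.getLast? = some (a.1, !a.2) := by
    rw [hc', List.append_assoc,
      List.getLast?_append_of_ne_nil _ (by simp [invRev]),
      List.getLast?_append_of_ne_nil _ (invRev_ne_nil (by simp)), invRev_cons,
      List.getLast?_concat]
  have := hcyc (a.1, !a.2) (by rw [hlast]; rfl) a (by rw [hhead]; rfl)
  apply this
  simp

lemma sq_toWord [DecidableEq α] (x : FreeGroup α) :
    (x * x).toWord = reduce (x.toWord ++ x.toWord) := by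
  have h : x * x = mk (x.toWord ++ x.toWord) := by rw [← mul_mk, mk_toWord]
  rw [h, toWord_mk]

lemma eq_one_of_sq [DecidableEq α] {x : FreeGroup α} (h : x * x = 1) : x = 1 := by
  obtain ⟨p, c, hu, hcyc⟩ := decomp x.toWord.length x.toWord le_rfl (chain'_toWord x)
  have hch : List.Chain' Rd (p ++ c ++ invRev p) := by
    have h' := chain'_toWord x
    rwa [hu] at h'
  rcases eq_or_ne c [] with rfl | hc
  · have hp : p = [] := nil_of_chain'_mul_inv (by simpa using hch)
    rw [← FreeGroup.toWord_eq_nil_iff, hu, hp]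
    simp [invRev]
  · exfalso
    have e1 : reduce (x.toWord ++ x.toWord) = p ++ (c ++ c) ++ invRev p := by
      rw [hu]
      exact reduce_sq hch hc hcyc
    have h0 : (x * x).toWord = [] := by rw [h, FreeGroup.toWord_one]
    rw [sq_toWord, e1] at h0
    have hlen := congrArg List.length h0
    simp only [List.length_append, List.length_nil, invRev_length] at hlen
    exact hc (List.eq_nil_of_length_eq_zero (by omega))

lemma sq_inj [DecidableEq α] {x y : FreeGroup α} (h : x * x = y * y) : x = y := by
  obtain ⟨p, c, hu, hcyc⟩ := decomp x.toWord.length x.toWord le_rfl (chain'_toWord x)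
  obtain ⟨q, d, hv, hdyc⟩ := decomp y.toWord.length y.toWord le_rfl (chain'_toWord y)
  have hchx : List.Chain' Rd (p ++ c ++ invRev p) := by
    have h' := chain'_toWord x; rwa [hu] at h'
  have hchy : List.Chain' Rd (q ++ d ++ invRev q) := by
    have h' := chain'_toWord y; rwa [hv] at h'
  rcases eq_or_ne c [] with rfl | hc
  · -- x = 1
    have hp : p = [] := nil_of_chain'_mul_inv (by simpa using hchx)
    have hx1 : x = 1 := by
      rw [← FreeGroup.toWord_eq_nil_iff, hu, hp]; simp [invRev]
    have hy1 : y = 1 := eq_one_of_sq (by rw [← h, hx1, one_mul])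
    rw [hx1, hy1]
  rcases eq_or_ne d [] with rfl | hd
  · have hq : q = [] := nil_of_chain'_mul_inv (by simpa using hchy)
    have hy1 : y = 1 := by
      rw [← FreeGroup.toWord_eq_nil_iff, hv, hq]; simp [invRev]
    have hx1 : x = 1 := eq_one_of_sq (by rw [h, hy1, one_mul])
    rw [hx1, hy1]
  -- main case
  have e1 : reduce (x.toWord ++ x.toWord) = p ++ (c ++ c) ++ invRev p := by
    rw [hu]; exact reduce_sq hchx hc hcyc
  have e2 : reduce (y.toWord ++ y.toWord) = q ++ (d ++ d) ++ invRev q := by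
    rw [hv]; exact reduce_sq hchy hd hdyc
  have E : p ++ (c ++ c) ++ invRev p = q ++ (d ++ d) ++ invRev q := by
    rw [← e1, ← e2, ← sq_toWord, ← sq_toWord, h]
  have hccyc : ∀ a ∈ (c ++ c).getLast?, ∀ b ∈ (c ++ c).head?, Rd a b := by
    intro a ha b hb
    obtain ⟨hd0, tl, rfl⟩ := List.exists_cons_of_ne_nil hc
    refine hcyc a ?_ b ?_
    · rwa [List.getLast?_append_of_ne_nil _ (by simp)] at ha
    · simpa using hb
  have hddyc : ∀ a ∈ (d ++ d).getLast?, ∀ b ∈ (d ++ d).head?, Rd a b := by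
    intro a ha b hb
    obtain ⟨hd0, tl, rfl⟩ := List.exists_cons_of_ne_nil hd
    refine hdyc a ?_ b ?_
    · rwa [List.getLast?_append_of_ne_nil _ (by simp)] at ha
    · simpa using hb
  have hpq : p = q := by
    rcases le_total p.length q.length with hle | hle
    · exact decomp_unique hle E hccyc
    · exact (decomp_unique hle E.symm hddyc).symm
  subst hpq
  have E2 : c ++ c = d ++ d := by
    have e3 : p ++ ((c ++ c) ++ invRev p) = p ++ ((d ++ d) ++ invRev p) := by
      simpa [List.append_assoc] using E
    exact List.append_cancel_right (List.append_cancel_left e3)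
  have hlen : c.length = d.length := by
    have := congrArg List.length E2
    simp only [List.length_append] at this
    omega
  have hcd : c = d := by
    have := congrArg (List.take c.length) E2
    rwa [List.take_left, hlen, List.take_left] at this
  apply FreeGroup.toWord_injective
  rw [hu, hv, hcd]

end Stmt10Aux

theorem stmt10 {α : Type*} :
    (∀ z₁ z₂ : FreeGroup α, z₂ * z₁ = (z₁ * z₂)⁻¹ → z₁ * z₂ = 1) ∧
    (∀ w : FreeGroup α, w ≠ 1 →
      ¬ ∃ z₁ z₂ : FreeGroup α, w = z₁ * z₂ ∧ w⁻¹ = z₂ * z₁) := by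
  classical
  have main : ∀ z₁ z₂ : FreeGroup α, z₂ * z₁ = (z₁ * z₂)⁻¹ → z₁ * z₂ = 1 := by
    intro z₁ z₂ h
    have key : (z₁ * z₂ * z₁) * (z₁ * z₂ * z₁) = z₁ * z₁ := by
      calc (z₁ * z₂ * z₁) * (z₁ * z₂ * z₁)
          = z₁ * ((z₂ * z₁) * (z₁ * z₂)) * z₁ := by group
        _ = z₁ * ((z₁ * z₂)⁻¹ * (z₁ * z₂)) * z₁ := by rw [h]
        _ = z₁ * z₁ := by group
    have h2 : z₁ * z₂ * z₁ = z₁ := Stmt10Aux.sq_inj key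
    have h3 : z₁ * z₂ * z₁ = 1 * z₁ := by rw [h2, one_mul]
    exact mul_right_cancel h3
  refine ⟨main, ?_⟩
  rintro w hw ⟨z₁, z₂, h1, h2⟩
  apply hw
  rw [h1]
  exact main z₁ z₂ (by rw [← h1, ← h2])
end

section
/- Let p and q be relatively prime positive integers, and let φ : F(a,b) → F(a,b) be any of the three automorphisms of the free group on two generators determined by (a,b) ↦ (a^{−1}, b^{−1}), (a,b) ↦ (b,a), or (a,b) ↦ (b^{−1}, a^{−1}). Then φ(u_{q/p}) is conjugate in F(a,b) to u_{q/p} or to u_{q/p}^{−1}. -/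
/-- The 2-bridge relator word `u_{q/p} = x_1^{ε_1} x_2^{ε_2} ⋯ x_{2p}^{ε_{2p}}` in the
free group on two generators `a = FreeGroup.of true` and `b = FreeGroup.of false`,
where `x_i = a` if `i` is odd, `x_i = b` if `i` is even, and `ε_i = (−1)^{⌊(i−1)q/p⌋}`.
(Below the index `i : Fin (2*p)` corresponds to the position `i + 1`.) -/
def uWord (p q : ℕ) : FreeGroup Bool :=
  (List.ofFn (fun i : Fin (2 * p) =>
    (FreeGroup.of (decide ((i : ℕ) % 2 = 0))) ^ ((-1 : ℤ) ^ ((i : ℕ) * q / p)))).prod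

namespace Stmt12Aux

/-- The exponent `ε_{i+1} = (−1)^{⌊iq/p⌋}`. -/
def ee (p q i : ℕ) : ℤ := (-1) ^ (i * q / p)

/-- The `i`-th syllable of the word. -/
def gg (p q i : ℕ) : FreeGroup Bool :=
  (FreeGroup.of (decide (i % 2 = 0))) ^ (ee p q i)

lemma uWord_eq (p q : ℕ) :
    uWord p q = ((List.range (2 * p)).map (gg p q)).prod := by
  rw [uWord, List.ofFn_eq_map, ← List.map_coe_finRange_eq_range, List.map_map]
  exact congrArg List.prod (List.map_congr_left fun i _ => rfl)

/-- The relevant endomorphisms of the free group: `of x ↦ (of (x xor c))^d`. -/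
def Φ (c : Bool) (d : ℤ) : FreeGroup Bool →* FreeGroup Bool :=
  FreeGroup.lift fun x => (FreeGroup.of (xor x c)) ^ d

lemma Φ_of (c : Bool) (d : ℤ) (x : Bool) :
    Φ c d (FreeGroup.of x) = (FreeGroup.of (xor x c)) ^ d :=
  FreeGroup.lift_apply_of

lemma Φ_gg (c : Bool) (d : ℤ) (p q i : ℕ) :
    Φ c d (gg p q i) =
      (FreeGroup.of (xor (decide (i % 2 = 0)) c)) ^ (d * ee p q i) := by
  rw [gg, map_zpow, Φ_of, ← zpow_mul]

lemma ee_add_p (p q : ℕ) (hp : 0 < p) (i : ℕ) :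
    ee p q (i + p) = (-1) ^ q * ee p q i := by
  unfold ee
  rw [add_mul, Nat.add_mul_div_left _ _ hp, pow_add, mul_comm]

lemma ee_add_2p (p q : ℕ) (hp : 0 < p) (i : ℕ) :
    ee p q (i + 2 * p) = ee p q i := by
  unfold ee
  have h : (i + 2 * p) * q = i * q + p * (2 * q) := by ring
  rw [h, Nat.add_mul_div_left _ _ hp, pow_add, pow_mul, neg_one_sq, one_pow, mul_one]

lemma gg_add_2p (p q : ℕ) (hp : 0 < p) (i : ℕ) :
    gg p q (i + 2 * p) = gg p q i := by
  unfold gg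
  have h : (i + 2 * p) % 2 = i % 2 := by omega
  rw [ee_add_2p p q hp, h]

lemma letter_flip (m j : ℕ) (hm : m % 2 = 1) (hj : j ≤ m) :
    decide ((m - j) % 2 = 0) = !decide (j % 2 = 0) := by
  have h : (m - j) % 2 = 0 ↔ ¬ (j % 2 = 0) := by omega
  rw [← decide_not]
  exact decide_eq_decide.mpr h

lemma letter_add (i p : ℕ) :
    decide ((i + p) % 2 = 0) = xor (decide (i % 2 = 0)) (decide (Odd p)) := by
  have h1 : (i + p) % 2 = (i % 2 + p % 2) % 2 := by omega
  rcases Nat.mod_two_eq_zero_or_one p with h | h <;>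
    rcases Nat.mod_two_eq_zero_or_one i with h' | h' <;>
      simp [h1, h, h', Nat.odd_iff]

lemma arith_key (p K T M J D R : ℕ) (hmk : M + 1 = p * K) (hdm : p * D + R = J)
    (hr : R < p) (hJM : J ≤ M) (h1 : T = M - J) (hK : D + 1 ≤ K)
    (h3 : p * (D + 1) = p * D + p) (h2 : p * (K - (D + 1)) + p * (D + 1) = p * K) :
    T = (p - 1 - R) + p * (K - (D + 1)) := by omega

lemma floor_key (p q : ℕ) (hp : 0 < p) {m K j : ℕ}
    (hmk : m * q + 1 = p * K) (hj : j ≤ m) :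
    (m - j) * q / p + j * q / p + 1 = K := by
  have hdm : p * (j * q / p) + j * q % p = j * q := Nat.div_add_mod (j * q) p
  have hr : j * q % p < p := Nat.mod_lt _ hp
  have hJM : j * q ≤ m * q := Nat.mul_le_mul_right q hj
  have hK : j * q / p + 1 ≤ K := by
    have h1 : p * (j * q / p) < p * K := by omega
    exact Nat.lt_of_mul_lt_mul_left h1
  have h1 : (m - j) * q = m * q - j * q := Nat.sub_mul m j q
  have h3 : p * (j * q / p + 1) = p * (j * q / p) + p := by ring
  have h2 : p * (K - (j * q / p + 1)) + p * (j * q / p + 1) = p * K := by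
    rw [← Nat.mul_add]
    congr 1
    omega
  have hsub : (m - j) * q = (p - 1 - j * q % p) + p * (K - (j * q / p + 1)) :=
    arith_key p K _ _ _ _ _ hmk hdm hr hJM h1 hK h3 h2
  have hdiv := Nat.add_mul_div_left (p - 1 - j * q % p) (K - (j * q / p + 1)) hp
  have hzero : (p - 1 - j * q % p) / p = 0 := Nat.div_eq_of_lt (by omega)
  have hq : (m - j) * q / p = K - (j * q / p + 1) := by
    rw [hsub, hdiv, hzero, zero_add]
  rw [hq]
  omega

lemma ee_rev (p q : ℕ) (hp : 0 < p) {m K j : ℕ}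
    (hmk : m * q + 1 = p * K) (hj : j ≤ m) :
    (-1 : ℤ) ^ K * ee p q j = - ee p q (m - j) := by
  have hADK := floor_key p q hp hmk hj
  set A := (m - j) * q / p with hA
  set D := j * q / p with hD
  unfold ee
  rw [← hD, ← hA, ← hADK, pow_add, pow_add, pow_one]
  have h2 : ((-1 : ℤ)) ^ D * (-1) ^ D = 1 := by
    rw [← pow_add]
    exact Even.neg_one_pow ⟨D, rfl⟩
  calc (-1 : ℤ) ^ A * (-1) ^ D * -1 * (-1) ^ D
      = (-1 : ℤ) ^ A * ((-1) ^ D * (-1) ^ D) * -1 := by ring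
    _ = -(-1 : ℤ) ^ A := by rw [h2]; ring

lemma exists_m (p q : ℕ) (hp : 0 < p) (hq : 0 < q) (hpq : Nat.Coprime p q) :
    ∃ m K : ℕ, m % 2 = 1 ∧ 2 * p - 1 ≤ m ∧ m ≤ 4 * p - 1 ∧
      m * q + 1 = p * K ∧ (-1 : ℤ) ^ K = (-1) ^ (q + 1) := by
  rcases Nat.even_or_odd q with hqe | hqo
  · -- q even, hence p odd
    have hpo : p % 2 = 1 := by
      rcases Nat.even_or_odd p with hpe | hpo
      · exfalso
        have h2 : (2 : ℕ) ∣ Nat.gcd p q := Nat.dvd_gcd hpe.two_dvd hqe.two_dvd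
        rw [hpq] at h2
        omega
      · exact Nat.odd_iff.mp hpo
    -- an inverse of -q mod p
    haveI : NeZero p := ⟨by omega⟩
    have hcop : Nat.Coprime q p := hpq.symm
    set u := ZMod.unitOfCoprime q hcop with hu
    set x : ZMod p := -((u⁻¹ : (ZMod p)ˣ) : ZMod p) with hx
    have hxq : x * (q : ZMod p) = -1 := by
      rw [hx, ← ZMod.coe_unitOfCoprime q hcop, ← hu]
      rw [neg_mul, ← Units.val_mul, inv_mul_cancel, Units.val_one]
    set c := x.val with hc
    have hcp : c < p := ZMod.val_lt x
    have hdvd : p ∣ c * q + 1 := by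
      rw [← ZMod.natCast_eq_zero_iff]
      push_cast
      rw [ZMod.natCast_zmod_val, hxq]
      ring
    -- choose an odd representative in range
    set m1 := c + 2 * p with hm1
    set m2 := c + 3 * p with hm2
    have hd1 : p ∣ m1 * q + 1 := by
      have : m1 * q + 1 = (c * q + 1) + p * (2 * q) := by ring
      rw [this]
      exact Nat.dvd_add hdvd ⟨2 * q, rfl⟩
    have hd2 : p ∣ m2 * q + 1 := by
      have : m2 * q + 1 = (c * q + 1) + p * (3 * q) := by ring
      rw [this]
      exact Nat.dvd_add hdvd ⟨3 * q, rfl⟩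
    have hmain : ∃ m : ℕ, m % 2 = 1 ∧ 2 * p - 1 ≤ m ∧ m ≤ 4 * p - 1 ∧ p ∣ m * q + 1 := by
      rcases Nat.even_or_odd m1 with he | ho
      · have h1 : m1 % 2 = 0 := Nat.even_iff.mp he
        exact ⟨m2, by omega, by omega, by omega, hd2⟩
      · exact ⟨m1, Nat.odd_iff.mp ho, by omega, by omega, hd1⟩
    obtain ⟨m, hmo, hmlo, hmhi, hmd⟩ := hmain
    obtain ⟨K, hK⟩ := hmd
    refine ⟨m, K, hmo, hmlo, hmhi, hK, ?_⟩
    have hmq : Even (m * q) := hqe.mul_left m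
    have hKodd : K % 2 = 1 := by
      have h1 : (m * q + 1) % 2 = 1 := by
        rcases hmq with ⟨r, hr⟩
        omega
      rw [hK] at h1
      rcases Nat.mod_two_eq_zero_or_one K with h | h
      · exfalso
        rcases (Nat.even_iff.mpr h) with ⟨r, hr⟩
        have : p * K = 2 * (p * r) := by rw [hr]; ring
        omega
      · exact h
    rw [Odd.neg_one_pow (Nat.odd_iff.mpr hKodd),
      Odd.neg_one_pow (by rcases hqe with ⟨r, hr⟩; exact ⟨r, by omega⟩)]
  · -- q odd
    haveI : NeZero (2 * p) := ⟨by omega⟩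
    have hcop : Nat.Coprime q (2 * p) := by
      apply Nat.Coprime.mul_right _ hpq.symm
      exact Nat.coprime_two_right.mpr hqo
    set u := ZMod.unitOfCoprime q hcop with hu
    set x : ZMod (2 * p) := -((u⁻¹ : (ZMod (2 * p))ˣ) : ZMod (2 * p)) with hx
    have hxq : x * (q : ZMod (2 * p)) = -1 := by
      rw [hx, ← ZMod.coe_unitOfCoprime q hcop, ← hu]
      rw [neg_mul, ← Units.val_mul, inv_mul_cancel, Units.val_one]
    set c := x.val with hc
    have hcp : c < 2 * p := ZMod.val_lt x
    have hdvd : 2 * p ∣ c * q + 1 := by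
      rw [← ZMod.natCast_eq_zero_iff]
      push_cast
      rw [ZMod.natCast_zmod_val, hxq]
      ring
    obtain ⟨m, hm⟩ : ∃ m, m = c + 2 * p := ⟨_, rfl⟩
    have hmd : 2 * p ∣ m * q + 1 := by
      have h : m * q + 1 = (c * q + 1) + 2 * p * q := by rw [hm]; ring
      rw [h]
      exact Nat.dvd_add hdvd ⟨q, rfl⟩
    obtain ⟨t, ht⟩ := hmd
    refine ⟨m, 2 * t, ?_, by omega, by omega, by rw [ht]; ring, ?_⟩
    · -- m odd
      have h2 : m * q + 1 = 2 * (p * t) := by rw [ht]; ring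
      have hmq : (m * q) % 2 = 1 := by omega
      have : Odd (m * q) := Nat.odd_iff.mpr hmq
      rcases (Nat.odd_mul.mp this) with ⟨hmo, -⟩
      exact Nat.odd_iff.mp hmo
    · rw [Even.neg_one_pow ⟨t, by ring⟩,
        Even.neg_one_pow (by rcases hqo with ⟨r, hr⟩; exact ⟨r + 1, by omega⟩)]

lemma isConj_inv {G : Type*} [Group G] {a b : G} (h : IsConj a b) :
    IsConj a⁻¹ b⁻¹ := by
  obtain ⟨g, hg⟩ := isConj_iff.mp h
  exact isConj_iff.mpr ⟨g, by rw [← hg]; group⟩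

lemma prod_conj {G : Type*} [Group G] (x y : G) : IsConj (y * x) (x * y) :=
  isConj_iff.mpr ⟨x, by group⟩

lemma rev_range : ∀ n : ℕ,
    (List.range n).reverse = (List.range n).map (fun j => n - 1 - j)
  | 0 => by simp
  | (n + 1) => by
    have hrhs : (List.range (n + 1)).map (fun j => n + 1 - 1 - j)
        = n :: (List.range n).map (fun j => n - 1 - j) := by
      rw [List.range_succ_eq_map, List.map_cons, List.map_map]
      congr 1
      exact List.map_congr_left fun j _ => by
        show n + 1 - 1 - Nat.succ j = n - 1 - j
        omega
    rw [hrhs, List.range_succ, List.reverse_append, rev_range n]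
    rfl

section Main

variable (p q : ℕ)

/-- The "half-shift" automorphism conjugates `u` to itself. -/
lemma HA (hp : 0 < p) :
    IsConj (Φ (decide (Odd p)) ((-1) ^ q) (uWord p q)) (uWord p q) := by
  set c := decide (Odd p) with hcdef
  set d := ((-1 : ℤ)) ^ q with hddef
  set V := ((List.range p).map (gg p q)).prod with hV
  set W := ((List.range p).map (fun i => gg p q (p + i))).prod with hW
  have hu : uWord p q = V * W := by
    rw [uWord_eq, two_mul, List.range_add, List.map_append, List.prod_append,
      List.map_map]
    rfl
  have hΦg : ∀ i : ℕ, Φ c d (gg p q i) = gg p q (p + i) := by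
    intro i
    rw [Φ_gg, gg]
    have hl : decide ((p + i) % 2 = 0) = xor (decide (i % 2 = 0)) c := by
      rw [add_comm]
      exact letter_add i p
    have he : ee p q (p + i) = d * ee p q i := by
      rw [add_comm, ee_add_p p q hp i, hddef]
    rw [hl, he]
  have hΦV : Φ c d V = W := by
    rw [hV, hW, map_list_prod, List.map_map]
    exact congrArg List.prod (List.map_congr_left fun i _ => hΦg i)
  have hd2 : d * d = 1 := by
    rw [hddef, ← pow_add]
    exact Even.neg_one_pow ⟨q, rfl⟩
  have hΦΦ : ∀ z : FreeGroup Bool, Φ c d (Φ c d z) = z := by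
    have hcomp : (Φ c d).comp (Φ c d) = MonoidHom.id _ := by
      apply FreeGroup.ext_hom
      intro a
      simp only [MonoidHom.comp_apply, MonoidHom.id_apply, Φ_of, map_zpow]
      rw [← zpow_mul, hd2, zpow_one, Bool.xor_assoc]
      simp
    intro z
    have := DFunLike.congr_fun hcomp z
    simpa using this
  have hΦW : Φ c d W = V := by rw [← hΦV, hΦΦ]
  rw [hu, map_mul, hΦV, hΦW]
  exact prod_conj V W

/-- The "reversal" automorphism conjugates `u` to `u⁻¹`. -/
lemma HB (hp : 0 < p) (hq : 0 < q) (hpq : Nat.Coprime p q) :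
    IsConj (Φ true ((-1) ^ (q + 1)) (uWord p q)) ((uWord p q)⁻¹) := by
  obtain ⟨m, K, hm2, hm1, hm4, hmk, hsgn⟩ := exists_m p q hp hq hpq
  set s := m - (2 * p - 1) with hs
  set t := 2 * p - s with ht
  have hst : 2 * p = t + s := by omega
  have hst' : 2 * p = s + t := by omega
  have hP : ∀ j, j < 2 * p →
      Φ true ((-1 : ℤ) ^ (q + 1)) (gg p q j) = (gg p q (m - j))⁻¹ := by
    intro j hjlt
    have hj : j ≤ m := by omega
    rw [Φ_gg, gg, ← zpow_neg]
    have hl : decide ((m - j) % 2 = 0) = xor (decide (j % 2 = 0)) true := by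
      rw [Bool.xor_true]
      exact letter_flip m j hm2 hj
    have he : -(ee p q (m - j)) = (-1 : ℤ) ^ (q + 1) * ee p q j := by
      rw [← hsgn, ee_rev p q hp hmk hj]
    rw [hl, he]
  set F : ℕ → FreeGroup Bool := fun j => Φ true ((-1 : ℤ) ^ (q + 1)) (gg p q j)
    with hF
  set H : ℕ → FreeGroup Bool := fun j => (gg p q (2 * p - 1 - j))⁻¹ with hH
  have huinv : (uWord p q)⁻¹ = ((List.range (2 * p)).map H).prod := by
    rw [uWord_eq, List.prod_inv_reverse, ← List.map_reverse, ← List.map_reverse,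
      rev_range, List.map_map, List.map_map]
    exact congrArg List.prod (List.map_congr_left fun j _ => rfl)
  have hφu : Φ true ((-1 : ℤ) ^ (q + 1)) (uWord p q) =
      ((List.range (2 * p)).map F).prod := by
    rw [uWord_eq, map_list_prod, List.map_map]
    rfl
  have key1 : ∀ j, j < s → F j = H (t + j) := by
    intro j hjs
    rw [hF, hH]
    simp only []
    rw [hP j (by omega)]
    have hidx : m - j = (2 * p - 1 - (t + j)) + 2 * p := by omega
    rw [hidx, gg_add_2p p q hp]
  have key2 : ∀ j, j < t → F (s + j) = H j := by
    intro j hjt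
    rw [hF, hH]
    simp only []
    rw [hP (s + j) (by omega)]
    have hidx : m - (s + j) = 2 * p - 1 - j := by omega
    rw [hidx]
  have hL : ((List.range (2 * p)).map F).prod =
      ((List.range s).map F).prod *
        ((List.range t).map (fun j => F (s + j))).prod := by
    rw [hst', List.range_add, List.map_append, List.prod_append, List.map_map]
    rfl
  have hR : ((List.range (2 * p)).map H).prod =
      ((List.range t).map H).prod *
        ((List.range s).map (fun j => H (t + j))).prod := by
    rw [hst, List.range_add, List.map_append, List.prod_append, List.map_map]
    rfl
  have e1 : (List.range s).map F = (List.range s).map (fun j => H (t + j)) :=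
    List.map_congr_left fun j hj => key1 j (List.mem_range.mp hj)
  have e2 : (List.range t).map (fun j => F (s + j)) = (List.range t).map H :=
    List.map_congr_left fun j hj => key2 j (List.mem_range.mp hj)
  rw [hφu, huinv, hL, hR, e1, e2]
  exact prod_conj _ _

/-- The third automorphism conjugates `u` to `u⁻¹`. -/
lemma HC (hp : 0 < p) (hq : 0 < q) (hpq : Nat.Coprime p q) :
    IsConj (Φ (!decide (Odd p)) (-1) (uWord p q)) ((uWord p q)⁻¹) := by
  set c := decide (Odd p) with hcdef
  have hd12 : ((-1 : ℤ)) ^ q * (-1) ^ (q + 1) = -1 := by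
    rw [← pow_add]
    exact Odd.neg_one_pow ⟨q, by ring⟩
  have hcomp : (Φ c ((-1) ^ q)).comp (Φ true ((-1) ^ (q + 1))) = Φ (!c) (-1) := by
    apply FreeGroup.ext_hom
    intro a
    simp only [MonoidHom.comp_apply, Φ_of, map_zpow]
    rw [← zpow_mul, hd12]
    have hx : xor (xor a true) c = xor a (!c) := by
      simp [Bool.xor_assoc]
    rw [hx]
  have h1 := HB p q hp hq hpq
  have h2 := HA p q hp
  have h3 : IsConj (Φ c ((-1) ^ q) (Φ true ((-1) ^ (q + 1)) (uWord p q)))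
      (Φ c ((-1) ^ q) ((uWord p q)⁻¹)) :=
    (Φ c ((-1) ^ q)).map_isConj h1
  rw [map_inv] at h3
  have h5 : IsConj ((Φ c ((-1) ^ q)) (uWord p q))⁻¹ ((uWord p q)⁻¹) := isConj_inv h2
  have h6 := h3.trans h5
  have h7 : Φ (!c) (-1) (uWord p q) =
      Φ c ((-1) ^ q) (Φ true ((-1) ^ (q + 1)) (uWord p q)) := by
    rw [← MonoidHom.comp_apply, hcomp]
  rw [h7]
  exact h6

end Main

end Stmt12Aux

open Stmt12Aux in
theorem stmt12 (p q : ℕ) (hp : 0 < p) (hq : 0 < q) (hpq : Nat.Coprime p q)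
    (φ : FreeGroup Bool →* FreeGroup Bool)
    (hφ : (∀ x : Bool, φ (FreeGroup.of x) = (FreeGroup.of x)⁻¹) ∨
          (∀ x : Bool, φ (FreeGroup.of x) = FreeGroup.of (!x)) ∨
          (∀ x : Bool, φ (FreeGroup.of x) = (FreeGroup.of (!x))⁻¹)) :
    IsConj (φ (uWord p q)) (uWord p q) ∨ IsConj (φ (uWord p q)) ((uWord p q)⁻¹) := by
  have hqodd_of_peven : Even p → Odd q := by
    intro hpe
    rcases Nat.even_or_odd q with hqe | hqo
    · exfalso
      have h2 : (2 : ℕ) ∣ Nat.gcd p q := Nat.dvd_gcd hpe.two_dvd hqe.two_dvd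
      rw [hpq] at h2
      omega
    · exact hqo
  have hpodd_of_qeven : Even q → Odd p := by
    intro hqe
    rcases Nat.even_or_odd p with hpe | hpo
    · exfalso
      have h2 : (2 : ℕ) ∣ Nat.gcd p q := Nat.dvd_gcd hpe.two_dvd hqe.two_dvd
      rw [hpq] at h2
      omega
    · exact hpo
  rcases hφ with h | h | h
  · -- φ = Φ false (-1)
    have hφeq : φ = Φ false (-1) := by
      apply FreeGroup.ext_hom
      intro a
      rw [h a, Φ_of, Bool.xor_false, zpow_neg, zpow_one]
    rcases Nat.even_or_odd p with hpe | hpo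
    · left
      have hqo := hqodd_of_peven hpe
      have hc : decide (Odd p) = false := by
        simp [Nat.not_odd_iff_even.mpr hpe]
      have hd : ((-1 : ℤ)) ^ q = -1 := Odd.neg_one_pow hqo
      rw [hφeq, ← hc, ← hd]
      exact HA p q hp
    · right
      have hc : decide (Odd p) = true := decide_eq_true hpo
      have : (false : Bool) = !decide (Odd p) := by rw [hc]; rfl
      rw [hφeq, this]
      exact HC p q hp hq hpq
  · -- φ = Φ true 1
    have hφeq : φ = Φ true 1 := by
      apply FreeGroup.ext_hom
      intro a
      rw [h a, Φ_of, Bool.xor_true, zpow_one]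
    rcases Nat.even_or_odd q with hqe | hqo
    · left
      have hpo := hpodd_of_qeven hqe
      have hc : decide (Odd p) = true := decide_eq_true hpo
      have hd : ((-1 : ℤ)) ^ q = 1 := Even.neg_one_pow hqe
      rw [hφeq, ← hc, ← hd]
      exact HA p q hp
    · right
      have hd : ((-1 : ℤ)) ^ (q + 1) = 1 :=
        Even.neg_one_pow (by rcases hqo with ⟨r, hr⟩; exact ⟨r + 1, by omega⟩)
      rw [hφeq, ← hd]
      exact HB p q hp hq hpq
  · -- φ = Φ true (-1)
    have hφeq : φ = Φ true (-1) := by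
      apply FreeGroup.ext_hom
      intro a
      rw [h a, Φ_of, Bool.xor_true, zpow_neg, zpow_one]
    rcases Nat.even_or_odd q with hqe | hqo
    · right
      have hd : ((-1 : ℤ)) ^ (q + 1) = -1 :=
        Odd.neg_one_pow (by rcases hqe with ⟨r, hr⟩; exact ⟨r, by omega⟩)
      rw [hφeq, ← hd]
      exact HB p q hp hq hpq
    · rcases Nat.even_or_odd p with hpe | hpo
      · right
        have hc : decide (Odd p) = false := by
          simp [Nat.not_odd_iff_even.mpr hpe]
        have : (true : Bool) = !decide (Odd p) := by rw [hc]; rfl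
        rw [hφeq, this]
        exact HC p q hp hq hpq
      · left
        have hc : decide (Odd p) = true := decide_eq_true hpo
        have hd : ((-1 : ℤ)) ^ q = -1 := Odd.neg_one_pow hqo
        rw [hφeq, ← hc, ← hd]
        exact HA p q hp
end

section
/- Let w_1, w_2, w_3 be cyclically alternating words in the letters a^{±1}, b^{±1}. Then at least one of the three products w_1 w_2, w_2 w_3, w_3 w_1 is reduced without cancellation, i.e., the last letter of the first factor is not the inverse of the first letter of the second factor. (This is the key step showing that the symmetrized set generated by the 2-bridge relator u_r satisfies the small cancellation condition T(4).) -/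
/-- A word in the letters `a^{±1}, b^{±1}` is a nonempty list of pairs
`(generator, sign)`, where the generator (`a` or `b`) and the sign (`+1` or `−1`)
are both encoded by a `Bool`.  The word is *cyclically alternating* if consecutive
letters have distinct generators and also the last and first generators differ. -/
def CyclicallyAlternating (w : List (Bool × Bool)) (hw : w ≠ []) : Prop :=
  w.Chain' (fun x y => x.1 ≠ y.1) ∧ (w.getLast hw).1 ≠ (w.head hw).1

/-- The product `w * w'` is *reduced without cancellation* if the last letter of `w`
is not the inverse of the first letter of `w'` (the inverse of a letter is the same
generator with the opposite sign). -/
def ReducedProduct (w w' : List (Bool × Bool)) (hw : w ≠ []) (hw' : w' ≠ []) : Prop :=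
  ¬ ((w.getLast hw).1 = (w'.head hw').1 ∧ (w.getLast hw).2 ≠ (w'.head hw').2)

theorem stmt13 (w₁ w₂ w₃ : List (Bool × Bool))
    (h₁ : w₁ ≠ []) (h₂ : w₂ ≠ []) (h₃ : w₃ ≠ [])
    (a₁ : CyclicallyAlternating w₁ h₁)
    (a₂ : CyclicallyAlternating w₂ h₂)
    (a₃ : CyclicallyAlternating w₃ h₃) :
    ReducedProduct w₁ w₂ h₁ h₂ ∨ ReducedProduct w₂ w₃ h₂ h₃ ∨
      ReducedProduct w₃ w₁ h₃ h₁ := by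
  by_contra h
  push_neg at h
  simp only [ReducedProduct, not_or, not_not] at h
  obtain ⟨⟨e₁, s₁⟩, ⟨e₂, s₂⟩, ⟨e₃, s₃⟩⟩ := h
  obtain ⟨_, c₁⟩ := a₁
  obtain ⟨_, c₂⟩ := a₂
  obtain ⟨_, c₃⟩ := a₃
  clear s₁ s₂ s₃
  revert e₁ e₂ e₃ c₁ c₂ c₃
  generalize (w₁.getLast h₁).1 = x1
  generalize (w₂.getLast h₂).1 = x2
  generalize (w₃.getLast h₃).1 = x3
  generalize (w₁.head h₁).1 = y1
  generalize (w₂.head h₂).1 = y2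
  generalize (w₃.head h₃).1 = y3
  revert x1 x2 x3 y1 y2 y3
  decide
end

section
/- Let p and q be relatively prime positive integers with q < p. Let W be the word of length 2p representing u_{q/p}, let R be the set consisting of all cyclic permutations of W and all cyclic permutations of the inverse word of W, and call a nonempty word z a piece if z occurs as an initial segment of two distinct elements of R. Then no element of R can be written as a concatenation of three or fewer pieces; i.e., if w ∈ R and w = z_1 z_2 ⋯ z_n with each z_i a piece, then n ≥ 4. (This is the small cancellation condition C(4) for the upper presentation of the 2-bridge link group G(K(q/p)).) -/
/-- The word `u_{q/p}` represented as the list of length `2p` whose `i`-th entry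
(1-indexed `i`, so below the index runs over `i : Fin (2*p)` with position `i+1`)
is the letter `(x_i, ε_i)`: the generator `x_i` is `a` (encoded `true`) if `i` is odd
and `b` (encoded `false`) if `i` is even, and the sign `ε_i = (−1)^{⌊(i−1)q/p⌋}`
is encoded by a `Bool` (`true` = `+1`). -/
def bWord (p q : ℕ) : List (Bool × Bool) :=
  List.ofFn (fun i : Fin (2 * p) =>
    (decide ((i : ℕ) % 2 = 0), decide (((i : ℕ) * q / p) % 2 = 0)))

/-- The inverse of a word: reverse the list and negate all signs. -/
def invWord (w : List (Bool × Bool)) : List (Bool × Bool) :=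
  (w.map (fun l => (l.1, !l.2))).reverse

/-- The symmetrized set `R` generated by `u_{q/p}`: all cyclic permutations
(rotations) of the word `u_{q/p}` and of its inverse word. -/
def Rset (p q : ℕ) : Set (List (Bool × Bool)) :=
  {w | ∃ d : ℕ, w = (bWord p q).rotate d ∨ w = (invWord (bWord p q)).rotate d}

/-- A *piece* is a nonempty word occurring as an initial segment of two distinct
elements of `R`. -/
def IsPiece (p q : ℕ) (z : List (Bool × Bool)) : Prop :=
  z ≠ [] ∧ ∃ w₁ w₂, w₁ ∈ Rset p q ∧ w₂ ∈ Rset p q ∧ w₁ ≠ w₂ ∧ z <+: w₁ ∧ z <+: w₂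

namespace Stmt14


/-- Floor-division addition with carry. -/
lemma addDiv {p : ℕ} (hp : 0 < p) (q a b : ℕ) :
    (a + b) * q / p = a * q / p + b * q / p +
      (if p ≤ a * q % p + b * q % p then 1 else 0) := by
  rw [add_mul]; exact Nat.add_div hp

lemma fpar_periodic {p : ℕ} (hp : 0 < p) (q a : ℕ) :
    a * q / p % 2 = (a % (2 * p)) * q / p % 2 := by
  conv_lhs => rw [← Nat.mod_add_div a (2 * p)]
  have h : (a % (2 * p) + 2 * p * (a / (2 * p))) * q
      = a % (2 * p) * q + p * (2 * (a / (2 * p) * q)) := by ring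
  rw [h, Nat.add_mul_div_left _ _ hp]
  omega

lemma fpar_congr {p : ℕ} (hp : 0 < p) (q : ℕ) {a b : ℕ} (h : a % (2 * p) = b % (2 * p)) :
    a * q / p % 2 = b * q / p % 2 := by
  rw [fpar_periodic hp q a, fpar_periodic hp q b, h]

lemma rmod_periodic {p : ℕ} (hp : 0 < p) (q a : ℕ) :
    a * q % p = (a % (2 * p)) * q % p := by
  conv_lhs => rw [← Nat.mod_add_div a (2 * p)]
  have h : (a % (2 * p) + 2 * p * (a / (2 * p))) * q
      = a % (2 * p) * q + p * (2 * (a / (2 * p) * q)) := by ring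
  rw [h, Nat.add_mul_mod_self_left]

lemma rmod_congr {p : ℕ} (hp : 0 < p) (q : ℕ) {a b : ℕ} (h : a % (2 * p) = b % (2 * p)) :
    a * q % p = b * q % p := by
  rw [rmod_periodic hp q a, rmod_periodic hp q b, h]

lemma modeq_of_zmod {n a b : ℕ} (h : (a : ZMod n) = (b : ZMod n)) : a % n = b % n :=
  (ZMod.natCast_eq_natCast_iff a b n).1 h

/-- the sign-comparison lemma for two W-type positions (shift form) -/
lemma sign_shift_iff {p : ℕ} (hp : 0 < p) (q a δ : ℕ) :
    (decide (a * q / p % 2 = 0) = decide ((a + δ) * q / p % 2 = 0)) ↔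
      (δ * q / p + (if p ≤ a * q % p + δ * q % p then 1 else 0)) % 2 = 0 := by
  have h := addDiv hp q a δ
  by_cases hc : p ≤ a * q % p + δ * q % p
  · rw [if_pos hc] at h ⊢
    rw [decide_eq_decide]
    omega
  · rw [if_neg hc] at h ⊢
    rw [decide_eq_decide]
    omega

/-- the sign-comparison lemma for a W-position against an I-position (sum form) -/
lemma sign_mix_iff {p : ℕ} (hp : 0 < p) (q a u : ℕ) :
    (decide (a * q / p % 2 = 0) = ! decide (u * q / p % 2 = 0)) ↔
      ((a + u) * q / p + (if p ≤ a * q % p + u * q % p then 1 else 0)) % 2 = 1 := by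
  have h := addDiv hp q a u
  rw [← decide_not, decide_eq_decide]
  by_cases hc : p ≤ a * q % p + u * q % p
  · rw [if_pos hc] at h ⊢; omega
  · rw [if_neg hc] at h ⊢; omega

lemma bar_t {p q t b : ℕ} (ht : t * q % p = p - 1) (hb : b % p = t) :
    b * q % p = p - 1 := by
  rw [← Nat.mod_mul_mod, hb, ht]

lemma bar_0 {p q b : ℕ} (hb : b % p = 0) : b * q % p = 0 := by
  rw [← Nat.mod_mul_mod, hb, Nat.zero_mul, Nat.zero_mod]

lemma exists_t {p q : ℕ} (hp2 : 2 ≤ p) (hpq : Nat.Coprime p q) :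
    ∃ t, 0 < t ∧ t < p ∧ t * q % p = p - 1 := by
  haveI : NeZero p := ⟨by omega⟩
  set T : ZMod p := (↑(p - 1)) * (↑q)⁻¹ with hT
  have hmod : T.val * q % p = p - 1 := by
    have h1 : ((T.val * q : ℕ) : ZMod p) = ((p - 1 : ℕ) : ZMod p) := by
      push_cast
      rw [ZMod.natCast_val, ZMod.cast_id, hT]
      rw [mul_assoc, ZMod.inv_mul_of_unit]
      · ring
      · exact (ZMod.unitOfCoprime q hpq.symm).isUnit
    have h2 := modeq_of_zmod h1
    rwa [Nat.mod_eq_of_lt (by omega : p - 1 < p)] at h2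
  refine ⟨T.val, ?_, ZMod.val_lt T, hmod⟩
  rcases Nat.eq_zero_or_pos T.val with h | h
  · rw [h] at hmod; simp at hmod; omega
  · exact h



/-- number of "barriers" (positions ≡ a or b mod p, with `a < b < p`) in `[0, x)`. -/
def cnt (p a b x : ℕ) : ℕ :=
  2 * (x / p) + (if a + 1 ≤ x % p then 1 else 0) + (if b + 1 ≤ x % p then 1 else 0)

/-- the `m`-th barrier, in increasing order. -/
def bseq (p a b m : ℕ) : ℕ := m / 2 * p + (if m % 2 = 1 then b else a)

lemma kpa_div {p : ℕ} (hp : 0 < p) (k c : ℕ) (hc : c < p) : (k * p + c) / p = k := by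
  rw [Nat.add_comm, Nat.add_mul_div_right _ _ hp, Nat.div_eq_of_lt hc, Nat.zero_add]

lemma kpa_mod {p : ℕ} (k c : ℕ) (hc : c < p) : (k * p + c) % p = c := by
  rw [Nat.add_comm, Nat.add_mul_mod_self_right, Nat.mod_eq_of_lt hc]

lemma decomp {p : ℕ} (hp : 0 < p) (x : ℕ) : ∃ K R, R < p ∧ x = K * p + R :=
  ⟨x / p, x % p, Nat.mod_lt _ hp, (Nat.div_add_mod' x p).symm⟩

lemma bseq_lt_succ {p a b : ℕ} (hab : a < b) (hbp : b < p) (m : ℕ) :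
    bseq p a b m < bseq p a b (m + 1) := by
  rcases Nat.even_or_odd m with ⟨k, hk⟩ | ⟨k, hk⟩ <;> subst hk
  · rw [bseq, bseq, if_neg (by omega), if_pos (by omega),
      show (k + k) / 2 = k by omega, show (k + k + 1) / 2 = k by omega]
    omega
  · rw [bseq, bseq, if_pos (by omega), if_neg (by omega),
      show (2 * k + 1) / 2 = k by omega, show (2 * k + 1 + 1) / 2 = k + 1 by omega,
      show (k + 1) * p = k * p + p by ring]
    omega

lemma bseq_mono {p a b : ℕ} (hab : a < b) (hbp : b < p) : StrictMono (bseq p a b) :=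
  strictMono_nat_of_lt_succ (bseq_lt_succ hab hbp)

lemma cnt_bseq {p a b : ℕ} (hab : a < b) (hbp : b < p) (m : ℕ) :
    cnt p a b (bseq p a b m) = m := by
  have hp : 0 < p := by omega
  rcases Nat.even_or_odd m with ⟨k, hk⟩ | ⟨k, hk⟩ <;> subst hk
  · rw [bseq, if_neg (by omega), show (k + k) / 2 = k by omega, cnt,
      kpa_div hp k a (by omega), kpa_mod k a (by omega),
      if_neg (by omega), if_neg (by omega)]
    omega
  · rw [bseq, if_pos (by omega), show (2 * k + 1) / 2 = k by omega, cnt,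
      kpa_div hp k b (by omega), kpa_mod k b (by omega),
      if_pos (by omega), if_neg (by omega)]
    omega

lemma le_bseq_cnt {p a b : ℕ} (hab : a < b) (hbp : b < p) (x : ℕ) :
    x ≤ bseq p a b (cnt p a b x) := by
  have hp : 0 < p := by omega
  obtain ⟨K, R, hR, rfl⟩ := decomp hp x
  rw [cnt, kpa_div hp K R hR, kpa_mod K R hR]
  rcases le_or_gt R a with h1 | h1
  · rw [if_neg (by omega), if_neg (by omega), bseq, if_neg (by omega),
      show (2 * K + 0 + 0) / 2 = K by omega]
    omega
  · rcases le_or_gt R b with h2 | h2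
    · rw [if_pos (by omega), if_neg (by omega), bseq, if_pos (by omega),
        show (2 * K + 1 + 0) / 2 = K by omega]
      omega
    · rw [if_pos (by omega), if_pos (by omega), bseq, if_neg (by omega),
        show (2 * K + 1 + 1) / 2 = K + 1 by omega,
        show (K + 1) * p = K * p + p by ring]
      omega

lemma cnt_mono {p a b : ℕ} (hab : a < b) (hbp : b < p) {x y : ℕ} (hxy : x ≤ y) :
    cnt p a b x ≤ cnt p a b y := by
  have hp : 0 < p := by omega
  obtain ⟨K, R, hR, rfl⟩ := decomp hp x
  obtain ⟨K2, R2, hR2, rfl⟩ := decomp hp y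
  rw [cnt, cnt, kpa_div hp K R hR, kpa_mod K R hR, kpa_div hp K2 R2 hR2, kpa_mod K2 R2 hR2]
  have hKle : K ≤ K2 := by
    have := Nat.div_le_div_right (c := p) hxy
    rwa [kpa_div hp K R hR, kpa_div hp K2 R2 hR2] at this
  rcases eq_or_lt_of_le hKle with h | h
  · subst h
    have hRle : R ≤ R2 := by omega
    split_ifs <;> omega
  · split_ifs <;> omega

lemma cnt_add_period {p a b : ℕ} (hp : 0 < p) (x : ℕ) :
    cnt p a b (x + 2 * p) = cnt p a b x + 4 := by
  obtain ⟨K, R, hR, rfl⟩ := decomp hp x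
  have he : K * p + R + 2 * p = (K + 2) * p + R := by ring
  rw [he, cnt, cnt, kpa_div hp K R hR, kpa_mod K R hR,
    kpa_div hp (K + 2) R hR, kpa_mod (K + 2) R hR]
  split_ifs <;> omega

lemma bseq_mod {p a b : ℕ} (hap : a < p) (hbp : b < p) (m : ℕ) :
    bseq p a b m % p = if m % 2 = 1 then b else a := by
  rw [bseq]
  split_ifs with h
  · exact kpa_mod _ b hbp
  · exact kpa_mod _ a hap

/-- decomposition of a residue mod `2p` into `r%p` and a "high" bit. -/
lemma split_two {p r : ℕ} (hp : 0 < p) (hr : r < 2 * p) :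
    r % p = r ∨ p + r % p = r := by
  rcases lt_or_ge r p with h | h
  · exact Or.inl (Nat.mod_eq_of_lt h)
  · right
    have h2 : r - p < p := by omega
    have h3 : r % p = (r - p) % p := by
      conv_lhs => rw [show r = (r - p) + 1 * p by omega]
      rw [Nat.add_mul_mod_self_right]
    rw [h3, Nat.mod_eq_of_lt h2]
    omega

/-- value of the reflected position at a "0-type" I-barrier. -/
lemma Uval0 {p b : ℕ} (hp : 0 < p) (hb : b % p = p - 1) :
    (2 * p - 1 - b % (2 * p)) % p = 0 := by
  have hr : b % (2 * p) % p = b % p := Nat.mod_mod_of_dvd b ⟨2, by ring⟩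
  have hrlt : b % (2 * p) < 2 * p := Nat.mod_lt _ (by omega)
  rcases split_two hp hrlt with h | h <;> rw [hr, hb] at h
  · rw [show 2 * p - 1 - b % (2 * p) = p by omega, Nat.mod_self]
  · rw [show 2 * p - 1 - b % (2 * p) = 0 by omega, Nat.zero_mod]

/-- value of the reflected position at a "t-type" I-barrier. -/
lemma Uvalt {p t b : ℕ} (hp : 0 < p) (ht : t < p) (hb : b % p = p - 1 - t) (ht0 : 0 < t) :
    (2 * p - 1 - b % (2 * p)) % p = t := by
  have hr : b % (2 * p) % p = b % p := Nat.mod_mod_of_dvd b ⟨2, by ring⟩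
  have hrlt : b % (2 * p) < 2 * p := Nat.mod_lt _ (by omega)
  rcases split_two hp hrlt with h | h <;> rw [hr, hb] at h
  · rw [show 2 * p - 1 - b % (2 * p) = p + t by omega, Nat.add_mod_left, Nat.mod_eq_of_lt ht]
  · rw [show 2 * p - 1 - b % (2 * p) = t by omega, Nat.mod_eq_of_lt ht]



def ltrW (p q x j : ℕ) : Bool × Bool :=
  (decide ((x + j) % 2 = 0), decide ((x + j) * q / p % 2 = 0))

def ltrI (p q x j : ℕ) : Bool × Bool :=
  (decide ((x + j) % 2 = 1), ! decide ((2 * p - 1 - (x + j) % (2 * p)) * q / p % 2 = 0))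

lemma length_bWord (p q : ℕ) : (bWord p q).length = 2 * p := by
  simp [bWord]

lemma length_invWord (w : List (Bool × Bool)) : (invWord w).length = w.length := by
  simp [invWord]

lemma getW {p q : ℕ} (hp : 0 < p) (x j : ℕ)
    (hj : j < ((bWord p q).rotate x).length) :
    ((bWord p q).rotate x)[j] = ltrW p q x j := by
  rw [List.getElem_rotate]
  have hlen : (bWord p q).length = 2 * p := length_bWord p q
  have hidx : (j + x) % (bWord p q).length = (x + j) % (2 * p) := by
    rw [hlen, Nat.add_comm]
  simp only [hidx]
  simp only [bWord, List.getElem_ofFn]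
  have hklt : (x + j) % (2 * p) < 2 * p := Nat.mod_lt _ (by omega)
  have hm2 : (x + j) % (2 * p) % 2 = (x + j) % 2 := Nat.mod_mod_of_dvd _ ⟨p, by ring⟩
  have hmq : (x + j) % (2 * p) * q / p % 2 = (x + j) * q / p % 2 :=
    (fpar_periodic hp q (x + j)).symm
  unfold ltrW
  congr 1
  · rw [decide_eq_decide, hm2]
  · rw [decide_eq_decide, hmq]

lemma getI {p q : ℕ} (hp : 0 < p) (x j : ℕ)
    (hj : j < ((invWord (bWord p q)).rotate x).length) :
    ((invWord (bWord p q)).rotate x)[j] = ltrI p q x j := by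
  rw [List.getElem_rotate]
  have hlen : (invWord (bWord p q)).length = 2 * p := by
    rw [length_invWord, length_bWord]
  have hidx : (j + x) % (invWord (bWord p q)).length = (x + j) % (2 * p) := by
    rw [hlen, Nat.add_comm]
  simp only [hidx]
  simp only [invWord, List.getElem_reverse, List.getElem_map, List.length_reverse,
    List.length_map, bWord, List.length_ofFn, List.getElem_ofFn]
  have hklt : (x + j) % (2 * p) < 2 * p := Nat.mod_lt _ (by omega)
  have hm2 : (x + j) % (2 * p) % 2 = (x + j) % 2 := Nat.mod_mod_of_dvd _ ⟨p, by ring⟩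
  unfold ltrI
  congr 1
  · rw [decide_eq_decide]
    omega

lemma pref_shift {α : Type*} (l a b : List α) (x : ℕ)
    (h : a ++ b <+: l.rotate x) : b <+: l.rotate (x + a.length) := by
  obtain ⟨c, hc⟩ := h
  rw [← List.rotate_rotate, ← hc]
  have hlen : a.length ≤ (a ++ b ++ c).length := by
    simp [List.length_append]
  rw [List.rotate_eq_drop_append_take hlen]
  rw [List.append_assoc a b c, List.drop_left, List.take_left]
  exact ⟨c ++ a, by simp⟩


lemma mmWW {p q t : ℕ} (hp : 0 < p) (hpq : Nat.Coprime p q)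
    (ht : t * q % p = p - 1) (x y L bA bB : ℕ)
    (hag : ∀ j < L, ltrW p q x j = ltrW p q y j)
    (hne : ¬ ∀ j < 2 * p, ltrW p q x j = ltrW p q y j)
    (hbA1 : x ≤ bA) (hbA2 : bA < x + L) (hbA3 : bA % p = 0)
    (hbB1 : x ≤ bB) (hbB2 : bB < x + L) (hbB3 : bB % p = t) : False := by
  have h2p : 0 < 2 * p := by omega
  have hL : 0 < L := by omega
  have hdvd2 : (2 : ℕ) ∣ 2 * p := ⟨p, rfl⟩
  -- distinct starting positions mod 2p
  have hxy : x % (2 * p) ≠ y % (2 * p) := by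
    intro h
    apply hne; intro j hj
    have hc : (x + j) % (2 * p) = (y + j) % (2 * p) := Nat.ModEq.add_right j h
    have hg : (x + j) % 2 = (y + j) % 2 := by
      have h1 : (x + j) % (2 * p) % 2 = (x + j) % 2 := Nat.mod_mod_of_dvd _ hdvd2
      have h2 : (y + j) % (2 * p) % 2 = (y + j) % 2 := Nat.mod_mod_of_dvd _ hdvd2
      omega
    have hs : (x + j) * q / p % 2 = (y + j) * q / p % 2 := fpar_congr hp q hc
    unfold ltrW
    rw [hg, hs]
  -- same generator parity
  have hgen : x % 2 = y % 2 := by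
    have h0 := hag 0 hL
    rw [ltrW, ltrW, Prod.mk.injEq] at h0
    have h1 := h0.1
    rw [decide_eq_decide] at h1
    omega
  -- the shift δ
  set A := x % (2 * p) with hA
  set B := y % (2 * p) with hB
  have hAlt : A < 2 * p := Nat.mod_lt _ h2p
  have hBlt : B < 2 * p := Nat.mod_lt _ h2p
  set δ := (2 * p + B - A) % (2 * p) with hδdef
  have hδlt : δ < 2 * p := Nat.mod_lt _ h2p
  have hxδ : x + δ ≡ y [MOD 2 * p] := by
    calc x + δ ≡ A + (2 * p + B - A) [MOD 2 * p] :=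
          Nat.ModEq.add (Nat.mod_modEq x _).symm (Nat.mod_modEq _ _)
      _ = B + 2 * p := by omega
      _ ≡ y [MOD 2 * p] := by
          unfold Nat.ModEq
          rw [Nat.add_mod_right, hB]
          simp
  have hδ0 : δ ≠ 0 := by
    intro h0
    rw [h0, Nat.add_zero] at hxδ
    exact hxy hxδ
  have hδe : δ % 2 = 0 := by
    have h1 : (x + δ) % (2 * p) % 2 = (x + δ) % 2 := Nat.mod_mod_of_dvd _ hdvd2
    have h2 : y % (2 * p) % 2 = y % 2 := Nat.mod_mod_of_dvd _ hdvd2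
    have h3 := hxδ
    unfold Nat.ModEq at h3
    omega
  -- key sign equation at agreeing offsets
  have hkey : ∀ j < L, (x + j) * q / p % 2 = (x + j + δ) * q / p % 2 := by
    intro j hj
    have h0 := hag j hj
    rw [ltrW, ltrW, Prod.mk.injEq] at h0
    have hsnd := h0.2
    rw [decide_eq_decide] at hsnd
    have hc : (y + j) % (2 * p) = (x + j + δ) % (2 * p) := by
      have h4 : x + δ + j ≡ y + j [MOD 2 * p] := Nat.ModEq.add_right j hxδ
      have h5 : x + δ + j = x + j + δ := by ring
      rw [h5] at h4
      exact h4.symm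
    have h6 : (y + j) * q / p % 2 = (x + j + δ) * q / p % 2 := fpar_congr hp q hc
    omega
  by_cases hρ : δ * q % p = 0
  · -- δ must equal p, and q must be odd; contradiction with sign flip at j = 0
    have hpd : p ∣ δ := hpq.dvd_of_dvd_mul_right (Nat.dvd_of_mod_eq_zero hρ)
    obtain ⟨c, hc⟩ := hpd
    have hδp : δ = p := by
      rcases c with _ | c
      · omega
      · rcases c with _ | c
        · omega
        · exfalso
          have h7 : δ = p * c + 2 * p := by rw [hc]; ring
          omega
    have hpe : p % 2 = 0 := by omega
    have hqo : q % 2 = 1 := by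
      rcases Nat.even_or_odd q with ⟨c2, hc2⟩ | ⟨c2, hc2⟩
      · exfalso
        have h4 : (2 : ℕ) ∣ Nat.gcd p q := Nat.dvd_gcd ⟨p / 2, by omega⟩ ⟨c2, by omega⟩
        have h5 : Nat.gcd p q = 1 := hpq
        omega
      · omega
    have h0 := hkey 0 hL
    rw [addDiv hp q (x + 0) δ] at h0
    have hlt := Nat.mod_lt ((x + 0) * q) hp
    rw [hρ, if_neg (by omega)] at h0
    have hq2 : δ * q / p = q := by rw [hδp, Nat.mul_div_cancel_left q hp]
    omega
  · by_cases hκ : δ * q / p % 2 = 0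
    · -- mismatch at the t-type barrier bB
      have h0 := hkey (bB - x) (by omega)
      have hxb : x + (bB - x) = bB := by omega
      rw [hxb, addDiv hp q bB δ] at h0
      have hrB : bB * q % p = p - 1 := bar_t ht hbB3
      have hρpos : 0 < δ * q % p := Nat.pos_of_ne_zero hρ
      rw [hrB, if_pos (by omega)] at h0
      omega
    · -- mismatch at the 0-type barrier bA
      have h0 := hkey (bA - x) (by omega)
      have hxb : x + (bA - x) = bA := by omega
      rw [hxb, addDiv hp q bA δ] at h0
      have hrA : bA * q % p = 0 := bar_0 hbA3
      have hρlt : δ * q % p < p := Nat.mod_lt _ hp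
      rw [hrA, if_neg (by omega)] at h0
      omega

lemma mmII {p q t : ℕ} (hp : 0 < p) (hpq : Nat.Coprime p q)
    (ht : t * q % p = p - 1) (ht0 : 0 < t) (htp : t < p) (x y L bA bB : ℕ)
    (hag : ∀ j < L, ltrI p q x j = ltrI p q y j)
    (hne : ¬ ∀ j < 2 * p, ltrI p q x j = ltrI p q y j)
    (hbA1 : x ≤ bA) (hbA2 : bA < x + L) (hbA3 : bA % p = p - 1)
    (hbB1 : x ≤ bB) (hbB2 : bB < x + L) (hbB3 : bB % p = p - 1 - t) : False := by
  have h2p : 0 < 2 * p := by omega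
  have hL : 0 < L := by omega
  have hdvd2 : (2 : ℕ) ∣ 2 * p := ⟨p, rfl⟩
  have hxy : x % (2 * p) ≠ y % (2 * p) := by
    intro h
    apply hne; intro j hj
    have hc : (x + j) % (2 * p) = (y + j) % (2 * p) := Nat.ModEq.add_right j h
    have hg : (x + j) % 2 = (y + j) % 2 := by
      have h1 : (x + j) % (2 * p) % 2 = (x + j) % 2 := Nat.mod_mod_of_dvd _ hdvd2
      have h2 : (y + j) % (2 * p) % 2 = (y + j) % 2 := Nat.mod_mod_of_dvd _ hdvd2
      omega
    unfold ltrI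
    rw [hg, hc]
  have hgen : x % 2 = y % 2 := by
    have h0 := hag 0 hL
    rw [ltrI, ltrI, Prod.mk.injEq] at h0
    have h1 := h0.1
    rw [decide_eq_decide] at h1
    omega
  set A := x % (2 * p) with hA
  set B := y % (2 * p) with hB
  have hAlt : A < 2 * p := Nat.mod_lt _ h2p
  have hBlt : B < 2 * p := Nat.mod_lt _ h2p
  set δ := (2 * p + A - B) % (2 * p) with hδdef
  have hδlt : δ < 2 * p := Nat.mod_lt _ h2p
  have hyδ : y + δ ≡ x [MOD 2 * p] := by
    calc y + δ ≡ B + (2 * p + A - B) [MOD 2 * p] :=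
          Nat.ModEq.add (Nat.mod_modEq y _).symm (Nat.mod_modEq _ _)
      _ = A + 2 * p := by omega
      _ ≡ x [MOD 2 * p] := by
          unfold Nat.ModEq
          rw [Nat.add_mod_right, hA]
          simp
  have hδ0 : δ ≠ 0 := by
    intro h0
    rw [h0, Nat.add_zero] at hyδ
    exact hxy (hyδ.symm)
  have hδe : δ % 2 = 0 := by
    have h1 : (y + δ) % (2 * p) % 2 = (y + δ) % 2 := Nat.mod_mod_of_dvd _ hdvd2
    have h2 : x % (2 * p) % 2 = x % 2 := Nat.mod_mod_of_dvd _ hdvd2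
    have h3 := hyδ
    unfold Nat.ModEq at h3
    omega
  -- congruence between reflected positions
  have hUcong : ∀ j, (2 * p - 1 - (y + j) % (2 * p)) % (2 * p)
      = ((2 * p - 1 - (x + j) % (2 * p)) + δ) % (2 * p) := by
    intro j
    have hxlt : (x + j) % (2 * p) < 2 * p := Nat.mod_lt _ h2p
    have hylt : (y + j) % (2 * p) < 2 * p := Nat.mod_lt _ h2p
    set ux := 2 * p - 1 - (x + j) % (2 * p) with hux
    set uy := 2 * p - 1 - (y + j) % (2 * p) with huy
    have hx1 : ux + (x + j) % (2 * p) = 2 * p - 1 := by omega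
    have hy1 : uy + (y + j) % (2 * p) = 2 * p - 1 := by omega
    have goal2 : uy + ((y + j) % (2 * p)) ≡ (ux + δ) + ((y + j) % (2 * p)) [MOD 2 * p] → uy ≡ ux + δ [MOD 2 * p] :=
      fun h => Nat.ModEq.add_right_cancel' _ h
    refine (goal2 ?_).symm.symm
    rw [hy1]
    calc (2 * p - 1 : ℕ) = ux + (x + j) % (2 * p) := hx1.symm
      _ ≡ ux + (x + j) [MOD 2 * p] := Nat.ModEq.add_left _ (Nat.mod_modEq _ _)
      _ ≡ ux + (y + δ + j) [MOD 2 * p] := by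
          refine Nat.ModEq.add_left _ (Nat.ModEq.add_right j ?_)
          exact hyδ.symm
      _ = (ux + δ) + (y + j) := by ring
      _ ≡ (ux + δ) + ((y + j) % (2 * p)) [MOD 2 * p] :=
          Nat.ModEq.add_left _ (Nat.mod_modEq _ _).symm
  have hkey : ∀ j < L, (2 * p - 1 - (x + j) % (2 * p)) * q / p % 2
      = ((2 * p - 1 - (x + j) % (2 * p)) + δ) * q / p % 2 := by
    intro j hj
    have h0 := hag j hj
    rw [ltrI, ltrI, Prod.mk.injEq] at h0
    have hsnd := h0.2
    rw [Bool.not_inj_iff, decide_eq_decide] at hsnd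
    have h6 := fpar_congr hp q (hUcong j)
    omega
  by_cases hρ : δ * q % p = 0
  · have hpd : p ∣ δ := hpq.dvd_of_dvd_mul_right (Nat.dvd_of_mod_eq_zero hρ)
    obtain ⟨c, hc⟩ := hpd
    have hδp : δ = p := by
      rcases c with _ | c
      · omega
      · rcases c with _ | c
        · omega
        · exfalso
          have h7 : δ = p * c + 2 * p := by rw [hc]; ring
          omega
    have hpe : p % 2 = 0 := by omega
    have hqo : q % 2 = 1 := by
      rcases Nat.even_or_odd q with ⟨c2, hc2⟩ | ⟨c2, hc2⟩
      · exfalso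
        have h4 : (2 : ℕ) ∣ Nat.gcd p q := Nat.dvd_gcd ⟨p / 2, by omega⟩ ⟨c2, by omega⟩
        have h5 : Nat.gcd p q = 1 := hpq
        omega
      · omega
    have h0 := hkey 0 hL
    rw [addDiv hp q _ δ] at h0
    have hlt := Nat.mod_lt ((2 * p - 1 - (x + 0) % (2 * p)) * q) hp
    rw [hρ, if_neg (by omega)] at h0
    have hq2 : δ * q / p = q := by rw [hδp, Nat.mul_div_cancel_left q hp]
    omega
  · by_cases hκ : δ * q / p % 2 = 0
    · have h0 := hkey (bB - x) (by omega)
      have hxb : x + (bB - x) = bB := by omega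
      rw [hxb, addDiv hp q _ δ] at h0
      have hUt : (2 * p - 1 - bB % (2 * p)) % p = t := Uvalt hp htp hbB3 ht0
      have hrB : (2 * p - 1 - bB % (2 * p)) * q % p = p - 1 := bar_t ht hUt
      have hρpos : 0 < δ * q % p := Nat.pos_of_ne_zero hρ
      rw [hrB, if_pos (by omega)] at h0
      omega
    · have h0 := hkey (bA - x) (by omega)
      have hxb : x + (bA - x) = bA := by omega
      rw [hxb, addDiv hp q _ δ] at h0
      have hU0 : (2 * p - 1 - bA % (2 * p)) % p = 0 := Uval0 hp hbA3
      have hrA : (2 * p - 1 - bA % (2 * p)) * q % p = 0 := bar_0 hU0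
      have hρlt : δ * q % p < p := Nat.mod_lt _ hp
      rw [hrA, if_neg (by omega)] at h0
      omega

lemma sum_mod_eq {p : ℕ} (hp : 0 < p) (q a u S0 : ℕ)
    (hcong : (a + u) % (2 * p) = S0 % (2 * p)) :
    (a * q % p + u * q % p) % p = S0 * q % p := by
  have h1 : (a * q % p + u * q % p) % p = (a * q + u * q) % p := by
    rw [← Nat.add_mod]
  have h2 : a * q + u * q = (a + u) * q := by ring
  rw [h1, h2]
  exact rmod_congr hp q hcong

lemma carry_resolve {p s σ : ℕ} (hp : 0 < p) (hs : s < 2 * p) (hσ : σ < p)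
    (h : s % p = σ) : s = σ ∨ s = σ + p := by
  rcases split_two hp hs with h2 | h2 <;> omega

lemma mmWI {p q t : ℕ} (hp : 0 < p) (hpq : Nat.Coprime p q)
    (ht : t * q % p = p - 1) (x y L bA bB : ℕ)
    (hag : ∀ j < L, ltrW p q x j = ltrI p q y j)
    (hne : ¬ ∀ j < 2 * p, ltrW p q x j = ltrI p q y j)
    (hbA1 : x ≤ bA) (hbA2 : bA < x + L) (hbA3 : bA % p = 0)
    (hbB1 : x ≤ bB) (hbB2 : bB < x + L) (hbB3 : bB % p = t) : False := by
  have h2p : 0 < 2 * p := by omega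
  have hL : 0 < L := by omega
  have hdvd2 : (2 : ℕ) ∣ 2 * p := ⟨p, rfl⟩
  -- generator parity relation
  have hpar : (x % 2 = 0 ↔ y % 2 = 1) := by
    have h0 := hag 0 hL
    rw [ltrW, ltrI, Prod.mk.injEq] at h0
    have h1 := h0.1
    rw [decide_eq_decide] at h1
    omega
  -- congruence of the position sums
  have hScong : ∀ j, ((x + j) + (2 * p - 1 - (y + j) % (2 * p))) % (2 * p)
      = ((x + 0) + (2 * p - 1 - (y + 0) % (2 * p))) % (2 * p) := by
    intro j
    have hylt : (y + j) % (2 * p) < 2 * p := Nat.mod_lt _ h2p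
    have hylt0 : (y + 0) % (2 * p) < 2 * p := Nat.mod_lt _ h2p
    set uj := 2 * p - 1 - (y + j) % (2 * p) with huj
    set u0 := 2 * p - 1 - (y + 0) % (2 * p) with hu0
    have hy1 : uj + (y + j) % (2 * p) = 2 * p - 1 := by omega
    have hy0 : u0 + (y + 0) % (2 * p) = 2 * p - 1 := by omega
    have goal2 : ((x + j) + uj) + ((y + j) % (2 * p)) ≡ ((x + 0) + u0) + ((y + j) % (2 * p)) [MOD 2 * p] →
        (x + j) + uj ≡ (x + 0) + u0 [MOD 2 * p] :=
      fun h => Nat.ModEq.add_right_cancel' _ h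
    apply goal2
    have hL1 : ((x + j) + uj) + ((y + j) % (2 * p)) = (x + j) + (2 * p - 1) := by omega
    rw [hL1]
    calc (x + j) + (2 * p - 1) = ((x + 0) + (2 * p - 1)) + j := by ring
      _ = ((x + 0) + (u0 + (y + 0) % (2 * p))) + j := by rw [hy0]
      _ = ((x + 0) + u0) + ((y + 0) % (2 * p) + j) := by ring
      _ ≡ ((x + 0) + u0) + (y + 0 + j) [MOD 2 * p] :=
          Nat.ModEq.add_left _ (Nat.ModEq.add_right j (Nat.mod_modEq _ _))
      _ = ((x + 0) + u0) + (y + j) := by ring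
      _ ≡ ((x + 0) + u0) + ((y + j) % (2 * p)) [MOD 2 * p] :=
          Nat.ModEq.add_left _ (Nat.mod_modEq _ _).symm
  set S0 := (x + 0) + (2 * p - 1 - (y + 0) % (2 * p)) with hS0
  set σ := S0 * q % p with hσdef
  have hσlt : σ < p := Nat.mod_lt _ hp
  set κ := S0 * q / p % 2 with hκdef
  have hκlt : κ < 2 := Nat.mod_lt _ (by omega)
  -- agreement in signs at offset j, in arithmetic form
  have hkey : ∀ j < L,
      (((x + j) + (2 * p - 1 - (y + j) % (2 * p))) * q / p
        + (if p ≤ (x + j) * q % p + (2 * p - 1 - (y + j) % (2 * p)) * q % p then 1 else 0)) % 2 = 1 := by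
    intro j hj
    have h0 := hag j hj
    rw [ltrW, ltrI, Prod.mk.injEq] at h0
    have hsnd := h0.2
    rw [← decide_not, decide_eq_decide] at hsnd
    have h := addDiv hp q (x + j) (2 * p - 1 - (y + j) % (2 * p))
    by_cases hc : p ≤ (x + j) * q % p + (2 * p - 1 - (y + j) % (2 * p)) * q % p
    · rw [if_pos hc] at h ⊢; omega
    · rw [if_neg hc] at h ⊢; omega
  -- transported constants
  have hFj : ∀ j, ((x + j) + (2 * p - 1 - (y + j) % (2 * p))) * q / p % 2 = κ :=
    fun j => fpar_congr hp q (hScong j)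
  have hsum : ∀ j, ((x + j) * q % p + (2 * p - 1 - (y + j) % (2 * p)) * q % p) % p = σ :=
    fun j => sum_mod_eq hp q _ _ _ (hScong j)
  rcases (by omega : κ = 0 ∨ κ = 1) with hκ0 | hκ1
  · -- κ = 0 : mismatch at the 0-type barrier bA
    have h0 := hkey (bA - x) (by omega)
    have hxb : x + (bA - x) = bA := by omega
    rw [hxb] at h0
    have hrA : bA * q % p = 0 := bar_0 hbA3
    have hsA := hsum (bA - x)
    rw [hxb, hrA] at hsA
    have hulr : (2 * p - 1 - (y + (bA - x)) % (2 * p)) * q % p < p := Nat.mod_lt _ hp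
    have hsv : (2 * p - 1 - (y + (bA - x)) % (2 * p)) * q % p = σ := by
      rw [Nat.zero_add] at hsA
      rw [Nat.mod_eq_of_lt hulr] at hsA
      exact hsA
    rw [hrA, hsv, if_neg (by omega)] at h0
    have hF := hFj (bA - x)
    rw [hxb] at hF
    omega
  · -- κ = 1
    by_cases hσe : σ = p - 1
    · -- full agreement: contradiction with hne
      apply hne
      intro j hj
      have hgenj : (x + j) % 2 = 0 ↔ (y + j) % 2 = 1 := by omega
      have hrAlt : (x + j) * q % p < p := Nat.mod_lt _ hp
      have hrUlt : (2 * p - 1 - (y + j) % (2 * p)) * q % p < p := Nat.mod_lt _ hp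
      have hsj := hsum j
      have hcr := carry_resolve hp (by omega) hσlt hsj
      have hnocarry : ¬ p ≤ (x + j) * q % p + (2 * p - 1 - (y + j) % (2 * p)) * q % p := by
        omega
      have h := addDiv hp q (x + j) (2 * p - 1 - (y + j) % (2 * p))
      rw [if_neg hnocarry] at h
      have hF := hFj j
      rw [ltrW, ltrI, Prod.mk.injEq]
      constructor
      · rw [decide_eq_decide]; omega
      · rw [← decide_not, decide_eq_decide]; omega
    · -- mismatch at the t-type barrier bB
      have h0 := hkey (bB - x) (by omega)
      have hxb : x + (bB - x) = bB := by omega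
      rw [hxb] at h0
      have hrB : bB * q % p = p - 1 := bar_t ht hbB3
      have hsB := hsum (bB - x)
      rw [hxb, hrB] at hsB
      have hulr : (2 * p - 1 - (y + (bB - x)) % (2 * p)) * q % p < p := Nat.mod_lt _ hp
      have hcr := carry_resolve hp (by omega) hσlt hsB
      have hcarry : p ≤ p - 1 + (2 * p - 1 - (y + (bB - x)) % (2 * p)) * q % p := by omega
      rw [hrB, if_pos hcarry] at h0
      have hF := hFj (bB - x)
      rw [hxb] at hF
      omega

lemma mmIW {p q t : ℕ} (hp : 0 < p) (hpq : Nat.Coprime p q)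
    (ht : t * q % p = p - 1) (ht0 : 0 < t) (htp : t < p) (x y L bA bB : ℕ)
    (hag : ∀ j < L, ltrI p q x j = ltrW p q y j)
    (hne : ¬ ∀ j < 2 * p, ltrI p q x j = ltrW p q y j)
    (hbA1 : x ≤ bA) (hbA2 : bA < x + L) (hbA3 : bA % p = p - 1)
    (hbB1 : x ≤ bB) (hbB2 : bB < x + L) (hbB3 : bB % p = p - 1 - t) : False := by
  have h2p : 0 < 2 * p := by omega
  have hL : 0 < L := by omega
  have hdvd2 : (2 : ℕ) ∣ 2 * p := ⟨p, rfl⟩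
  have hpar : (x % 2 = 1 ↔ y % 2 = 0) := by
    have h0 := hag 0 hL
    rw [ltrW, ltrI, Prod.mk.injEq] at h0
    have h1 := h0.1
    rw [decide_eq_decide] at h1
    omega
  have hScong : ∀ j, ((2 * p - 1 - (x + j) % (2 * p)) + (y + j)) % (2 * p)
      = ((2 * p - 1 - (x + 0) % (2 * p)) + (y + 0)) % (2 * p) := by
    intro j
    have hxlt : (x + j) % (2 * p) < 2 * p := Nat.mod_lt _ h2p
    have hxlt0 : (x + 0) % (2 * p) < 2 * p := Nat.mod_lt _ h2p
    set uj := 2 * p - 1 - (x + j) % (2 * p) with huj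
    set u0 := 2 * p - 1 - (x + 0) % (2 * p) with hu0
    have hx1 : uj + (x + j) % (2 * p) = 2 * p - 1 := by omega
    have hx0 : u0 + (x + 0) % (2 * p) = 2 * p - 1 := by omega
    have goal2 : (uj + (y + j)) + ((x + j) % (2 * p)) ≡ (u0 + (y + 0)) + ((x + j) % (2 * p)) [MOD 2 * p] →
        uj + (y + j) ≡ u0 + (y + 0) [MOD 2 * p] :=
      fun h => Nat.ModEq.add_right_cancel' _ h
    apply goal2
    have hL1 : (uj + (y + j)) + ((x + j) % (2 * p)) = (y + j) + (2 * p - 1) := by omega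
    rw [hL1]
    calc (y + j) + (2 * p - 1) = ((y + 0) + (2 * p - 1)) + j := by ring
      _ = ((y + 0) + (u0 + (x + 0) % (2 * p))) + j := by rw [hx0]
      _ = (u0 + (y + 0)) + ((x + 0) % (2 * p) + j) := by ring
      _ ≡ (u0 + (y + 0)) + (x + 0 + j) [MOD 2 * p] :=
          Nat.ModEq.add_left _ (Nat.ModEq.add_right j (Nat.mod_modEq _ _))
      _ = (u0 + (y + 0)) + (x + j) := by ring
      _ ≡ (u0 + (y + 0)) + ((x + j) % (2 * p)) [MOD 2 * p] :=
          Nat.ModEq.add_left _ (Nat.mod_modEq _ _).symm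
  set S0 := (2 * p - 1 - (x + 0) % (2 * p)) + (y + 0) with hS0
  set σ := S0 * q % p with hσdef
  have hσlt : σ < p := Nat.mod_lt _ hp
  set κ := S0 * q / p % 2 with hκdef
  have hκlt : κ < 2 := Nat.mod_lt _ (by omega)
  have hkey : ∀ j < L,
      (((2 * p - 1 - (x + j) % (2 * p)) + (y + j)) * q / p
        + (if p ≤ (2 * p - 1 - (x + j) % (2 * p)) * q % p + (y + j) * q % p then 1 else 0)) % 2 = 1 := by
    intro j hj
    have h0 := hag j hj
    rw [ltrW, ltrI, Prod.mk.injEq] at h0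
    have hsnd := h0.2
    rw [← decide_not, decide_eq_decide] at hsnd
    have h := addDiv hp q (2 * p - 1 - (x + j) % (2 * p)) (y + j)
    by_cases hc : p ≤ (2 * p - 1 - (x + j) % (2 * p)) * q % p + (y + j) * q % p
    · rw [if_pos hc] at h ⊢; omega
    · rw [if_neg hc] at h ⊢; omega
  have hFj : ∀ j, ((2 * p - 1 - (x + j) % (2 * p)) + (y + j)) * q / p % 2 = κ :=
    fun j => fpar_congr hp q (hScong j)
  have hsum : ∀ j, ((2 * p - 1 - (x + j) % (2 * p)) * q % p + (y + j) * q % p) % p = σ :=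
    fun j => sum_mod_eq hp q _ _ _ (hScong j)
  rcases (by omega : κ = 0 ∨ κ = 1) with hκ0 | hκ1
  · -- κ = 0 : mismatch at the 0-type I-barrier bA
    have h0 := hkey (bA - x) (by omega)
    have hxb : x + (bA - x) = bA := by omega
    rw [hxb] at h0
    have hU0 : (2 * p - 1 - bA % (2 * p)) % p = 0 := Uval0 hp hbA3
    have hrA : (2 * p - 1 - bA % (2 * p)) * q % p = 0 := bar_0 hU0
    have hsA := hsum (bA - x)
    rw [hxb, hrA] at hsA
    have hulr : (y + (bA - x)) * q % p < p := Nat.mod_lt _ hp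
    have hsv : (y + (bA - x)) * q % p = σ := by
      rw [Nat.zero_add, Nat.mod_eq_of_lt hulr] at hsA
      exact hsA
    rw [hrA, hsv, if_neg (by omega)] at h0
    have hF := hFj (bA - x)
    rw [hxb] at hF
    omega
  · by_cases hσe : σ = p - 1
    · apply hne
      intro j hj
      have hgenj : (x + j) % 2 = 1 ↔ (y + j) % 2 = 0 := by omega
      have hrAlt : (2 * p - 1 - (x + j) % (2 * p)) * q % p < p := Nat.mod_lt _ hp
      have hrUlt : (y + j) * q % p < p := Nat.mod_lt _ hp
      have hsj := hsum j
      have hcr := carry_resolve hp (by omega) hσlt hsj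
      have hnocarry : ¬ p ≤ (2 * p - 1 - (x + j) % (2 * p)) * q % p + (y + j) * q % p := by
        omega
      have h := addDiv hp q (2 * p - 1 - (x + j) % (2 * p)) (y + j)
      rw [if_neg hnocarry] at h
      have hF := hFj j
      rw [ltrW, ltrI, Prod.mk.injEq]
      constructor
      · rw [decide_eq_decide]; omega
      · rw [← decide_not, decide_eq_decide]; omega
    · -- mismatch at the t-type I-barrier bB
      have h0 := hkey (bB - x) (by omega)
      have hxb : x + (bB - x) = bB := by omega
      rw [hxb] at h0
      have hUt : (2 * p - 1 - bB % (2 * p)) % p = t := Uvalt hp htp hbB3 ht0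
      have hrB : (2 * p - 1 - bB % (2 * p)) * q % p = p - 1 := bar_t ht hUt
      have hsB := hsum (bB - x)
      rw [hxb, hrB] at hsB
      have hulr : (y + (bB - x)) * q % p < p := Nat.mod_lt _ hp
      have hcr := carry_resolve hp (by omega) hσlt hsB
      have hcarry : p ≤ p - 1 + (y + (bB - x)) * q % p := by omega
      rw [hrB, if_pos hcarry] at h0
      have hF := hFj (bB - x)
      rw [hxb] at hF
      omega


section KL

variable {p q t : ℕ}

/-- Key lemma, W-side: a piece which is a prefix of `rotate x` of `bWord`
cannot reach past the second barrier at or after `x`. -/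
lemma KLW (hp : 0 < p) (hpq : Nat.Coprime p q)
    (ht : t * q % p = p - 1) (ht0 : 0 < t) (htp : t < p)
    (x : ℕ) (z : List (Bool × Bool)) (hz : IsPiece p q z)
    (hpre : z <+: (bWord p q).rotate x) :
    x + z.length ≤ bseq p 0 t (cnt p 0 t x + 1) := by
  by_contra hcon
  push_neg at hcon
  set L := z.length with hLdef
  set m := cnt p 0 t x with hm
  have hb1 : x ≤ bseq p 0 t m := le_bseq_cnt ht0 htp x
  have hb12 : bseq p 0 t m < bseq p 0 t (m + 1) := bseq_lt_succ ht0 htp m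
  have hmod1 := bseq_mod (show (0:ℕ) < p by omega) htp m
  have hmod2 := bseq_mod (show (0:ℕ) < p by omega) htp (m + 1)
  -- barriers of both types inside [x, x + L)
  obtain ⟨bA, bB, hbA1, hbA2, hbA3, hbB1, hbB2, hbB3⟩ :
      ∃ bA bB, x ≤ bA ∧ bA < x + L ∧ bA % p = 0 ∧ x ≤ bB ∧ bB < x + L ∧ bB % p = t := by
    by_cases hpar : m % 2 = 1
    · refine ⟨bseq p 0 t (m + 1), bseq p 0 t m, by omega, by omega, ?_, by omega, by omega, ?_⟩
      · rw [hmod2, if_neg (by omega)]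
      · rw [hmod1, if_pos hpar]
    · refine ⟨bseq p 0 t m, bseq p 0 t (m + 1), by omega, by omega, ?_, by omega, by omega, ?_⟩
      · rw [hmod1, if_neg hpar]
      · rw [hmod2, if_pos (by omega)]
  obtain ⟨hzne, w1, w2, hw1, hw2, h12, hz1, hz2⟩ := hz
  have hulen : ((bWord p q).rotate x).length = 2 * p := by
    rw [List.length_rotate, length_bWord]
  have hLle : L ≤ 2 * p := by
    have := hpre.length_le
    omega
  have hv : ∃ v, v ∈ Rset p q ∧ v ≠ (bWord p q).rotate x ∧ z <+: v := by
    by_cases h : w1 = (bWord p q).rotate x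
    · exact ⟨w2, hw2, fun hh => h12 (h.trans hh.symm), hz2⟩
    · exact ⟨w1, hw1, h, hz1⟩
  obtain ⟨v, hvR, hvne, hzv⟩ := hv
  obtain ⟨e, he | he⟩ := hvR
  · subst he
    have hvlen : ((bWord p q).rotate e).length = 2 * p := by
      rw [List.length_rotate, length_bWord]
    have hag : ∀ j < L, ltrW p q x j = ltrW p q e j := by
      intro j hj
      have h1 : z[j]'(by omega) = ((bWord p q).rotate x)[j]'(by omega) :=
        hpre.getElem (by omega)
      have h2 : z[j]'(by omega) = ((bWord p q).rotate e)[j]'(by omega) :=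
        hzv.getElem (by omega)
      rw [getW hp x j (by omega)] at h1
      rw [getW hp e j (by omega)] at h2
      rw [← h1, ← h2]
    have hne2 : ¬ ∀ j < 2 * p, ltrW p q x j = ltrW p q e j := by
      intro hall
      apply hvne
      apply List.ext_getElem (by omega)
      intro n h1 h2
      rw [getW hp e n (by omega), getW hp x n (by omega)]
      exact (hall n (by omega)).symm
    exact mmWW hp hpq ht x e L bA bB hag hne2 hbA1 hbA2 hbA3 hbB1 hbB2 hbB3
  · subst he
    have hvlen : ((invWord (bWord p q)).rotate e).length = 2 * p := by
      rw [List.length_rotate, length_invWord, length_bWord]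
    have hag : ∀ j < L, ltrW p q x j = ltrI p q e j := by
      intro j hj
      have h1 : z[j]'(by omega) = ((bWord p q).rotate x)[j]'(by omega) :=
        hpre.getElem (by omega)
      have h2 : z[j]'(by omega) = ((invWord (bWord p q)).rotate e)[j]'(by omega) :=
        hzv.getElem (by omega)
      rw [getW hp x j (by omega)] at h1
      rw [getI hp e j (by omega)] at h2
      rw [← h1, ← h2]
    have hne2 : ¬ ∀ j < 2 * p, ltrW p q x j = ltrI p q e j := by
      intro hall
      apply hvne
      apply List.ext_getElem (by omega)
      intro n h1 h2
      rw [getI hp e n (by omega), getW hp x n (by omega)]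
      exact (hall n (by omega)).symm
    exact mmWI hp hpq ht x e L bA bB hag hne2 hbA1 hbA2 hbA3 hbB1 hbB2 hbB3

/-- Key lemma, I-side. -/
lemma KLI (hp : 0 < p) (hpq : Nat.Coprime p q)
    (ht : t * q % p = p - 1) (ht0 : 0 < t) (htp : t < p)
    (x : ℕ) (z : List (Bool × Bool)) (hz : IsPiece p q z)
    (hpre : z <+: (invWord (bWord p q)).rotate x) :
    x + z.length ≤ bseq p (p - 1 - t) (p - 1) (cnt p (p - 1 - t) (p - 1) x + 1) := by
  have hab : p - 1 - t < p - 1 := by omega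
  have hbp : p - 1 < p := by omega
  by_contra hcon
  push_neg at hcon
  set L := z.length with hLdef
  set m := cnt p (p - 1 - t) (p - 1) x with hm
  have hb1 : x ≤ bseq p (p - 1 - t) (p - 1) m := le_bseq_cnt hab hbp x
  have hb12 : bseq p (p - 1 - t) (p - 1) m < bseq p (p - 1 - t) (p - 1) (m + 1) :=
    bseq_lt_succ hab hbp m
  have hmod1 := bseq_mod (show p - 1 - t < p by omega) hbp m
  have hmod2 := bseq_mod (show p - 1 - t < p by omega) hbp (m + 1)
  obtain ⟨bA, bB, hbA1, hbA2, hbA3, hbB1, hbB2, hbB3⟩ :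
      ∃ bA bB, x ≤ bA ∧ bA < x + L ∧ bA % p = p - 1 ∧
        x ≤ bB ∧ bB < x + L ∧ bB % p = p - 1 - t := by
    by_cases hpar : m % 2 = 1
    · refine ⟨bseq p (p-1-t) (p-1) m, bseq p (p-1-t) (p-1) (m+1), by omega, by omega, ?_,
        by omega, by omega, ?_⟩
      · rw [hmod1, if_pos hpar]
      · rw [hmod2, if_neg (by omega)]
    · refine ⟨bseq p (p-1-t) (p-1) (m+1), bseq p (p-1-t) (p-1) m, by omega, by omega, ?_,
        by omega, by omega, ?_⟩
      · rw [hmod2, if_pos (by omega)]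
      · rw [hmod1, if_neg hpar]
  obtain ⟨hzne, w1, w2, hw1, hw2, h12, hz1, hz2⟩ := hz
  have hulen : ((invWord (bWord p q)).rotate x).length = 2 * p := by
    rw [List.length_rotate, length_invWord, length_bWord]
  have hLle : L ≤ 2 * p := by
    have := hpre.length_le
    omega
  have hv : ∃ v, v ∈ Rset p q ∧ v ≠ (invWord (bWord p q)).rotate x ∧ z <+: v := by
    by_cases h : w1 = (invWord (bWord p q)).rotate x
    · exact ⟨w2, hw2, fun hh => h12 (h.trans hh.symm), hz2⟩
    · exact ⟨w1, hw1, h, hz1⟩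
  obtain ⟨v, hvR, hvne, hzv⟩ := hv
  obtain ⟨e, he | he⟩ := hvR
  · subst he
    have hvlen : ((bWord p q).rotate e).length = 2 * p := by
      rw [List.length_rotate, length_bWord]
    have hag : ∀ j < L, ltrI p q x j = ltrW p q e j := by
      intro j hj
      have h1 : z[j]'(by omega) = ((invWord (bWord p q)).rotate x)[j]'(by omega) :=
        hpre.getElem (by omega)
      have h2 : z[j]'(by omega) = ((bWord p q).rotate e)[j]'(by omega) :=
        hzv.getElem (by omega)
      rw [getI hp x j (by omega)] at h1
      rw [getW hp e j (by omega)] at h2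
      rw [← h1, ← h2]
    have hne2 : ¬ ∀ j < 2 * p, ltrI p q x j = ltrW p q e j := by
      intro hall
      apply hvne
      apply List.ext_getElem (by omega)
      intro n h1 h2
      rw [getI hp x n (by omega), getW hp e n (by omega)]
      exact (hall n (by omega)).symm
    exact mmIW hp hpq ht ht0 htp x e L bA bB hag hne2 hbA1 hbA2 hbA3 hbB1 hbB2 hbB3
  · subst he
    have hvlen : ((invWord (bWord p q)).rotate e).length = 2 * p := by
      rw [List.length_rotate, length_invWord, length_bWord]
    have hag : ∀ j < L, ltrI p q x j = ltrI p q e j := by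
      intro j hj
      have h1 : z[j]'(by omega) = ((invWord (bWord p q)).rotate x)[j]'(by omega) :=
        hpre.getElem (by omega)
      have h2 : z[j]'(by omega) = ((invWord (bWord p q)).rotate e)[j]'(by omega) :=
        hzv.getElem (by omega)
      rw [getI hp x j (by omega)] at h1
      rw [getI hp e j (by omega)] at h2
      rw [← h1, ← h2]
    have hne2 : ¬ ∀ j < 2 * p, ltrI p q x j = ltrI p q e j := by
      intro hall
      apply hvne
      apply List.ext_getElem (by omega)
      intro n h1 h2
      rw [getI hp e n (by omega), getI hp x n (by omega)]
      exact (hall n (by omega)).symm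
    exact mmII hp hpq ht ht0 htp x e L bA bB hag hne2 hbA1 hbA2 hbA3 hbB1 hbB2 hbB3

lemma chainW (hp : 0 < p) (hpq : Nat.Coprime p q)
    (ht : t * q % p = p - 1) (ht0 : 0 < t) (htp : t < p) :
    ∀ (zs : List (List (Bool × Bool))) (x : ℕ),
      (∀ z ∈ zs, IsPiece p q z) → zs.flatten <+: (bWord p q).rotate x →
      cnt p 0 t (x + zs.flatten.length) ≤ cnt p 0 t x + zs.length := by
  intro zs
  induction zs with
  | nil => intro x _ _; simp
  | cons z tl ih =>
    intro x hall hpre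
    rw [List.flatten_cons] at hpre
    have hz : IsPiece p q z := hall z (by simp)
    have hzpre : z <+: (bWord p q).rotate x :=
      (List.prefix_append z tl.flatten).trans hpre
    have hKL := KLW hp hpq ht ht0 htp x z hz hzpre
    have htl : tl.flatten <+: (bWord p q).rotate (x + z.length) :=
      pref_shift _ z tl.flatten x hpre
    have ih2 := ih (x + z.length) (fun z' hz' => hall z' (by simp [hz'])) htl
    have hmono : cnt p 0 t (x + z.length) ≤ cnt p 0 t x + 1 := by
      calc cnt p 0 t (x + z.length) ≤ cnt p 0 t (bseq p 0 t (cnt p 0 t x + 1)) :=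
            cnt_mono ht0 htp hKL
        _ = cnt p 0 t x + 1 := cnt_bseq ht0 htp _
    have hlen : (z :: tl).flatten.length = z.length + tl.flatten.length := by
      rw [List.flatten_cons, List.length_append]
    rw [hlen, ← Nat.add_assoc]
    calc cnt p 0 t (x + z.length + tl.flatten.length)
        ≤ cnt p 0 t (x + z.length) + tl.length := ih2
      _ ≤ cnt p 0 t x + 1 + tl.length := by omega
      _ = cnt p 0 t x + (z :: tl).length := by rw [List.length_cons]; omega

lemma chainI (hp : 0 < p) (hpq : Nat.Coprime p q)
    (ht : t * q % p = p - 1) (ht0 : 0 < t) (htp : t < p) :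
    ∀ (zs : List (List (Bool × Bool))) (x : ℕ),
      (∀ z ∈ zs, IsPiece p q z) → zs.flatten <+: (invWord (bWord p q)).rotate x →
      cnt p (p-1-t) (p-1) (x + zs.flatten.length) ≤ cnt p (p-1-t) (p-1) x + zs.length := by
  have hab : p - 1 - t < p - 1 := by omega
  have hbp : p - 1 < p := by omega
  intro zs
  induction zs with
  | nil => intro x _ _; simp
  | cons z tl ih =>
    intro x hall hpre
    rw [List.flatten_cons] at hpre
    have hz : IsPiece p q z := hall z (by simp)
    have hzpre : z <+: (invWord (bWord p q)).rotate x :=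
      (List.prefix_append z tl.flatten).trans hpre
    have hKL := KLI hp hpq ht ht0 htp x z hz hzpre
    have htl : tl.flatten <+: (invWord (bWord p q)).rotate (x + z.length) :=
      pref_shift _ z tl.flatten x hpre
    have ih2 := ih (x + z.length) (fun z' hz' => hall z' (by simp [hz'])) htl
    have hmono : cnt p (p-1-t) (p-1) (x + z.length) ≤ cnt p (p-1-t) (p-1) x + 1 := by
      calc cnt p (p-1-t) (p-1) (x + z.length)
          ≤ cnt p (p-1-t) (p-1) (bseq p (p-1-t) (p-1) (cnt p (p-1-t) (p-1) x + 1)) :=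
            cnt_mono hab hbp hKL
        _ = cnt p (p-1-t) (p-1) x + 1 := cnt_bseq hab hbp _
    have hlen : (z :: tl).flatten.length = z.length + tl.flatten.length := by
      rw [List.flatten_cons, List.length_append]
    rw [hlen, ← Nat.add_assoc]
    calc cnt p (p-1-t) (p-1) (x + z.length + tl.flatten.length)
        ≤ cnt p (p-1-t) (p-1) (x + z.length) + tl.length := ih2
      _ ≤ cnt p (p-1-t) (p-1) x + 1 + tl.length := by omega
      _ = cnt p (p-1-t) (p-1) x + (z :: tl).length := by rw [List.length_cons]; omega

end KL


end Stmt14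

theorem stmt14 (p q : ℕ) (hq : 0 < q) (hqp : q < p) (hpq : Nat.Coprime p q) :
    ∀ w ∈ Rset p q, ∀ zs : List (List (Bool × Bool)),
      (∀ z ∈ zs, IsPiece p q z) → w = zs.flatten → 4 ≤ zs.length := by
  intro w hw zs hzs hflat
  have hp : 0 < p := by omega
  obtain ⟨t, ht0, htp, htq⟩ := Stmt14.exists_t (by omega : 2 ≤ p) hpq
  obtain ⟨d, hd | hd⟩ := hw
  · have heq : zs.flatten = (bWord p q).rotate d := hflat ▸ hd
    have hpre : zs.flatten <+: (bWord p q).rotate d := heq ▸ List.prefix_refl _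
    have hch := Stmt14.chainW hp hpq htq ht0 htp zs d hzs hpre
    have hlen : zs.flatten.length = 2 * p := by
      rw [heq, List.length_rotate, Stmt14.length_bWord]
    rw [hlen, Stmt14.cnt_add_period hp d] at hch
    omega
  · have heq : zs.flatten = (invWord (bWord p q)).rotate d := hflat ▸ hd
    have hpre : zs.flatten <+: (invWord (bWord p q)).rotate d := heq ▸ List.prefix_refl _
    have hch := Stmt14.chainI hp hpq htq ht0 htp zs d hzs hpre
    have hlen : zs.flatten.length = 2 * p := by
      rw [heq, List.length_rotate, Stmt14.length_invWord, Stmt14.length_bWord]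
    rw [hlen, Stmt14.cnt_add_period hp d] at hch
    omega
end

section
/- Let p and q be relatively prime positive integers, let m = ⌊p/q⌋, and let L be the list (s_1(q/p), …, s_{2q}(q/p)). Then there exist lists A and B of integers such that: (i) L = A ++ B ++ A ++ B; (ii) A and B are palindromes (each equals its own reverse); (iii) B is nonempty and its first and last entries equal m; (iv) if q = 1 then A is empty, and if q ≥ 2 then A is nonempty and its first and last entries equal m + 1; (v) the number of rotations d ∈ {0, 1, …, 2q−1} of L whose initial segment of length |B| equals B is exactly 2, and if A is nonempty then the number of rotations d ∈ {0, 1, …, 2q−1} of L whose initial segment of length |A| equals A is exactly 2 (i.e., each of A and B occurs exactly twice in the cyclic sequence CS(q/p)). -/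
namespace SAux

theorem ediv_eq_of {b : ℤ} (a k s : ℤ) (h : a = b * k + s) (h0 : 0 ≤ s) (h1 : s < b) :
    a / b = k := by
  have hb : b ≠ 0 := by intro h'; rw [h'] at h1; omega
  rw [h, add_comm (b * k) s, Int.add_mul_ediv_left s k hb,
    Int.ediv_eq_zero_of_lt h0 h1, zero_add]

theorem emod_eq_of {b : ℤ} (a k s : ℤ) (h : a = b * k + s) (h0 : 0 ≤ s) (h1 : s < b) :
    a % b = s := by
  have h2 := Int.mul_ediv_add_emod a b
  rw [ediv_eq_of a k s h h0 h1] at h2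
  linarith

theorem ceil_intCast_div (n : ℤ) (d : ℕ) (hd : 0 < d) :
    ⌈(n : ℚ) / (d : ℚ)⌉ = (n - 1) / (d : ℤ) + 1 := by
  have h0 : (n : ℚ) / (d : ℚ) = -(((-n : ℤ) : ℚ) / ((d : ℕ) : ℚ)) := by push_cast; ring
  rw [h0, Int.ceil_neg, Rat.floor_intCast_div_natCast]
  have hk := Int.mul_ediv_add_emod (n - 1) (d : ℤ)
  have hd' : (0 : ℤ) < (d : ℤ) := by exact_mod_cast hd
  have hb1 : 0 ≤ (n - 1) % (d : ℤ) := Int.emod_nonneg _ (by omega)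
  have hb2 : (n - 1) % (d : ℤ) < d := Int.emod_lt_of_pos _ hd'
  have h2 : (-n : ℤ) / (d : ℤ) = -((n - 1) / (d : ℤ)) - 1 :=
    ediv_eq_of _ _ ((d : ℤ) - 1 - (n - 1) % (d : ℤ)) (by linear_combination hk)
      (by linarith) (by linarith)
  rw [h2]; ring

theorem sSeq_eq (p q : ℕ) (hq : 0 < q) (j : ℤ) :
    sSeq p q j = (j * p - 1) / (q : ℤ) + 1 - ((j - 1) * p - 1) / (q : ℤ) - 1 := by
  unfold sSeq
  have h1 : ((j : ℚ) * p / q) = ((j * p : ℤ) : ℚ) / ((q : ℕ) : ℚ) := by push_cast; ring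
  have h2 : (((j : ℚ) - 1) * p / q) = (((j - 1) * p : ℤ) : ℚ) / ((q : ℕ) : ℚ) := by
    push_cast; ring
  rw [h1, h2, ceil_intCast_div _ _ hq, ceil_intCast_div _ _ hq]
  ring

/-- The letter function (without the `m` offset). -/
def Ff (q r j : ℤ) : ℤ := (j * r - 1) / q - ((j - 1) * r - 1) / q

theorem sSeq_eq_F (p q m r : ℕ) (hq : 0 < q) (hpr : (p : ℤ) = q * m + r) (j : ℤ) :
    sSeq p q j = m + Ff (q : ℤ) (r : ℤ) j := by
  rw [sSeq_eq p q hq j]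
  unfold Ff
  have hd1 := Int.mul_ediv_add_emod (j * (r : ℤ) - 1) (q : ℤ)
  have hd2 := Int.mul_ediv_add_emod ((j - 1) * (r : ℤ) - 1) (q : ℤ)
  have hq' : (0 : ℤ) < q := by exact_mod_cast hq
  have b11 : 0 ≤ (j * (r : ℤ) - 1) % q := Int.emod_nonneg _ (by omega)
  have b12 : (j * (r : ℤ) - 1) % q < q := Int.emod_lt_of_pos _ hq'
  have b21 : 0 ≤ ((j - 1) * (r : ℤ) - 1) % q := Int.emod_nonneg _ (by omega)
  have b22 : ((j - 1) * (r : ℤ) - 1) % q < q := Int.emod_lt_of_pos _ hq'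
  have e1 : (j * p - 1) / (q : ℤ) = j * m + (j * r - 1) / (q : ℤ) :=
    ediv_eq_of _ _ ((j * (r : ℤ) - 1) % q) (by linear_combination j * hpr - hd1) b11 b12
  have e2 : ((j - 1) * p - 1) / (q : ℤ) = (j - 1) * m + ((j - 1) * r - 1) / (q : ℤ) :=
    ediv_eq_of _ _ (((j - 1) * (r : ℤ) - 1) % q) (by linear_combination (j - 1) * hpr - hd2)
      b21 b22
  rw [e1, e2]; ring

theorem Ff_eq_ite (q r : ℤ) (hq : 0 < q) (h0r : 0 ≤ r) (hrq : r < q) (j : ℤ) :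
    Ff q r j = if (j * r - 1) % q < r then 1 else 0 := by
  unfold Ff
  have e : (j - 1) * r - 1 = (j * r - 1) - r := by ring
  rw [e]
  have hd := Int.mul_ediv_add_emod (j * r - 1) q
  have hb1 : 0 ≤ (j * r - 1) % q := Int.emod_nonneg _ (by omega)
  have hb2 : (j * r - 1) % q < q := Int.emod_lt_of_pos _ hq
  by_cases hc : (j * r - 1) % q < r
  · rw [if_pos hc]
    have h2 : (j * r - 1 - r) / q = (j * r - 1) / q - 1 :=
      ediv_eq_of _ _ ((j * r - 1) % q - r + q) (by linear_combination -hd)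
        (by linarith) (by linarith)
    rw [h2]; ring
  · rw [if_neg hc]
    have h2 : (j * r - 1 - r) / q = (j * r - 1) / q :=
      ediv_eq_of _ _ ((j * r - 1) % q - r) (by linear_combination -hd)
        (by linarith) (by linarith)
    rw [h2]; ring

theorem emod_key (q r j k : ℤ) (h : j % q = k % q) :
    (j * r - 1) % q = (k * r - 1) % q := by
  have e : ∀ x : ℤ, (x * r - 1) % q = (x % q * (r % q) % q - 1 % q) % q := by
    intro x; rw [Int.sub_emod, Int.mul_emod]
  rw [e j, e k, h]

theorem Ff_congr (q r : ℤ) (hq : 0 < q) (h0r : 0 ≤ r) (hrq : r < q) {j k : ℤ}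
    (h : j % q = k % q) : Ff q r j = Ff q r k := by
  rw [Ff_eq_ite q r hq h0r hrq, Ff_eq_ite q r hq h0r hrq, emod_key q r j k h]


theorem Ff_shift (q r : ℤ) (hq : 0 < q) (x j : ℤ) :
    Ff q r (x + j) = ((x * r - 1) % q + j * r) / q - ((x * r - 1) % q + (j - 1) * r) / q := by
  unfold Ff
  have hd := Int.mul_ediv_add_emod (x * r - 1) q
  have hqne : q ≠ 0 := by omega
  have e1 : (x + j) * r - 1 = ((x * r - 1) % q + j * r) + q * ((x * r - 1) / q) := by
    linear_combination -hd
  have e2 : (x + j - 1) * r - 1 = ((x * r - 1) % q + (j - 1) * r) + q * ((x * r - 1) / q) := by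
    linear_combination -hd
  rw [e1, e2, Int.add_mul_ediv_left _ _ hqne, Int.add_mul_ediv_left _ _ hqne]
  ring

theorem Ff_sum (q r : ℤ) (hq : 0 < q) (h0r : 0 ≤ r) (hrq : r < q) (x y : ℤ) (len : ℕ)
    (H : ∀ i : ℕ, i < len → Ff q r (x + i + 1) = Ff q r (y + i + 1)) :
    ((x * r - 1) % q + len * r) / q = ((y * r - 1) % q + len * r) / q := by
  induction len with
  | zero =>
    have bx1 : 0 ≤ (x * r - 1) % q := Int.emod_nonneg _ (by omega)
    have bx2 : (x * r - 1) % q < q := Int.emod_lt_of_pos _ hq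
    have by1 : 0 ≤ (y * r - 1) % q := Int.emod_nonneg _ (by omega)
    have by2 : (y * r - 1) % q < q := Int.emod_lt_of_pos _ hq
    simp only [Nat.cast_zero, zero_mul, add_zero]
    rw [Int.ediv_eq_zero_of_lt bx1 bx2, Int.ediv_eq_zero_of_lt by1 by2]
  | succ t ih =>
    have ht := H t (by omega)
    have h1 : Ff q r (x + t + 1) =
        ((x * r - 1) % q + ((t : ℤ) + 1) * r) / q - ((x * r - 1) % q + (t : ℤ) * r) / q := by
      have h := Ff_shift q r hq x ((t : ℤ) + 1)
      rw [show x + ((t : ℤ) + 1) = x + t + 1 by ring] at h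
      rw [h, show ((t : ℤ) + 1 - 1) = (t : ℤ) by ring]
    have h2 : Ff q r (y + t + 1) =
        ((y * r - 1) % q + ((t : ℤ) + 1) * r) / q - ((y * r - 1) % q + (t : ℤ) * r) / q := by
      have h := Ff_shift q r hq y ((t : ℤ) + 1)
      rw [show y + ((t : ℤ) + 1) = y + t + 1 by ring] at h
      rw [h, show ((t : ℤ) + 1 - 1) = (t : ℤ) by ring]
    have ih' := ih (fun i hi => H i (by omega))
    push_cast
    rw [h1, h2] at ht
    linarith

theorem Ff_palin (q r A : ℤ) (hq : 0 < q) (h0r : 0 ≤ r) (hrq : r < q)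
    (ha : (A * r) % q = 1 % q) (j : ℤ) :
    Ff q r (A + 1 - j) = Ff q r j := by
  rw [Ff_eq_ite q r hq h0r hrq, Ff_eq_ite q r hq h0r hrq]
  have hb1 : 0 ≤ (j * r - 1) % q := Int.emod_nonneg _ (by omega)
  have hb2 : (j * r - 1) % q < q := Int.emod_lt_of_pos _ hq
  have k2 : (A * r - 1) % q = 0 := by
    rw [Int.sub_emod, ha, ← Int.sub_emod]; simp
  have h1 : ((A + 1 - j) * r - 1) % q = (r - 1 - (j * r - 1) % q) % q := by
    have e1 : (A + 1 - j) * r - 1 = (r - 1 - (j * r - 1)) + (A * r - 1) := by ring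
    rw [e1, Int.add_emod, k2, add_zero, Int.emod_emod_of_dvd _ dvd_rfl,
      Int.sub_emod (r - 1) (j * r - 1)]
    conv_rhs => rw [Int.sub_emod (r - 1) ((j * r - 1) % q), Int.emod_emod_of_dvd _ dvd_rfl]
  rw [h1]
  by_cases hc : (j * r - 1) % q < r
  · have hr1 : 1 ≤ r := by omega
    have e2 : (r - 1 - (j * r - 1) % q) % q = r - 1 - (j * r - 1) % q :=
      Int.emod_eq_of_lt (by omega) (by omega)
    rw [e2, if_pos hc, if_pos (by omega)]
  · have e2 : (r - 1 - (j * r - 1) % q) % q = r - 1 - (j * r - 1) % q + q :=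
      emod_eq_of _ (-1) _ (by ring) (by omega) (by omega)
    rw [e2, if_neg hc, if_neg (by omega)]

theorem Ff_head0 (q r A : ℤ) (hq : 0 < q) (h0r : 0 ≤ r) (hrq : r < q)
    (ha : (A * r) % q = 1 % q) : Ff q r (A + 1) = 0 := by
  rw [Ff_eq_ite q r hq h0r hrq]
  have k2 : (A * r - 1) % q = 0 := by
    rw [Int.sub_emod, ha, ← Int.sub_emod]; simp
  have h1 : ((A + 1) * r - 1) % q = r := by
    have e1 : (A + 1) * r - 1 = r + (A * r - 1) := by ring
    rw [e1, Int.add_emod, k2, add_zero, Int.emod_emod_of_dvd _ dvd_rfl,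
      Int.emod_eq_of_lt h0r hrq]
  rw [h1, if_neg (by omega)]

theorem Ff_one (q r : ℤ) (hq : 0 < q) (h1r : 1 ≤ r) (hrq : r < q) :
    Ff q r 1 = 1 := by
  rw [Ff_eq_ite q r hq (by omega) hrq]
  have h1 : ((1 : ℤ) * r - 1) % q = r - 1 := by
    rw [show (1 : ℤ) * r - 1 = r - 1 by ring]
    exact Int.emod_eq_of_lt (by omega) (by omega)
  rw [h1, if_pos (by omega)]


theorem occA (q r a : ℕ) (hq2 : 2 ≤ q) (hco : Nat.Coprime r q) (hrq : r < q)
    (ha : (a * r) % q = 1) (haq : a < q) (d : ℕ) (hd : d < 2 * q) :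
    (∀ i : ℕ, i < a → Ff (q : ℤ) (r : ℤ) ((d : ℤ) + i + 1) = Ff (q : ℤ) (r : ℤ) ((i : ℤ) + 1))
      ↔ (d = 0 ∨ d = q) := by
  have hq' : (0 : ℤ) < (q : ℤ) := by exact_mod_cast (by omega : 0 < q)
  have hq2' : (2 : ℤ) ≤ (q : ℤ) := by exact_mod_cast hq2
  have hr1 : 1 ≤ r := by
    rcases Nat.eq_zero_or_pos r with h | h
    · subst h; rw [Nat.coprime_zero_left] at hco; omega
    · exact h
  have h0r : (0 : ℤ) ≤ (r : ℤ) := by positivity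
  have hrq' : (r : ℤ) < (q : ℤ) := by exact_mod_cast hrq
  have hk : (a : ℤ) * r = q * ((a * r / q : ℕ) : ℤ) + 1 := by
    have h := Nat.div_add_mod (a * r) q
    rw [ha] at h
    push_cast
    exact_mod_cast h.symm
  constructor
  · intro H
    have H' : ∀ i : ℕ, i < a →
        Ff (q : ℤ) (r : ℤ) ((d : ℤ) + i + 1) = Ff (q : ℤ) (r : ℤ) ((0 : ℤ) + i + 1) := by
      intro i hi
      rw [show ((0 : ℤ) + i + 1) = ((i : ℤ) + 1) by ring]
      exact H i hi
    have hsum := Ff_sum (q : ℤ) (r : ℤ) hq' h0r hrq' (d : ℤ) 0 a H'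
    have hb0 : ((0 : ℤ) * r - 1) % q = q - 1 :=
      emod_eq_of _ (-1) ((q : ℤ) - 1) (by ring) (by omega) (by omega)
    have hrhs : (((0 : ℤ) * r - 1) % q + (a : ℤ) * r) / q = ((a * r / q : ℕ) : ℤ) + 1 :=
      ediv_eq_of _ _ 0 (by rw [hb0]; linear_combination hk) le_rfl hq'
    have hb1 : 0 ≤ ((d : ℤ) * r - 1) % q := Int.emod_nonneg _ (by omega)
    have hb2 : ((d : ℤ) * r - 1) % q < q := Int.emod_lt_of_pos _ hq'
    by_cases hbd : ((d : ℤ) * r - 1) % q = (q : ℤ) - 1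
    · -- d*r ≡ 0 mod q
      have hdd := Int.mul_ediv_add_emod ((d : ℤ) * r - 1) (q : ℤ)
      rw [hbd] at hdd
      have hm0 : ((d : ℤ) * r) % q = 0 :=
        emod_eq_of _ (((d : ℤ) * r - 1) / q + 1) 0 (by linear_combination -hdd) le_rfl hq'
      have hnat : (d * r) % q = 0 := by
        have h2 : (((d * r) % q : ℕ) : ℤ) = 0 := by push_cast; exact hm0
        exact_mod_cast h2
      have hdvd : q ∣ d * r := Nat.dvd_of_mod_eq_zero hnat
      have hqd : q ∣ d := (Nat.Coprime.dvd_of_dvd_mul_right hco.symm) hdvd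
      obtain ⟨c, rfl⟩ := hqd
      have hc2 : c < 2 := Nat.lt_of_mul_lt_mul_left (show q * c < q * 2 by linarith [hd])
      interval_cases c
      · left; simp
      · right; simp
    · exfalso
      have hlhs : (((d : ℤ) * r - 1) % q + (a : ℤ) * r) / q =
          ((a * r / q : ℕ) : ℤ) :=
        ediv_eq_of _ _ (((d : ℤ) * r - 1) % q + 1) (by linear_combination hk)
          (by omega) (by omega)
      rw [hsum, hrhs] at hlhs
      omega
  · intro hcase i hi
    rcases hcase with rfl | h2
    · rw [show ((0 : ℕ) : ℤ) + i + 1 = ((i : ℤ) + 1) by push_cast; ring]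
    · rw [h2]
      apply Ff_congr (q : ℤ) (r : ℤ) hq' h0r hrq'
      rw [show ((q : ℤ)) + i + 1 = ((i : ℤ) + 1) + q * 1 by push_cast; ring,
        Int.add_mul_emod_self_left]

theorem occB (q r a : ℕ) (hq : 0 < q) (hco : Nat.Coprime r q) (hrq : r < q)
    (ha : (a * r) % q = 1 % q) (haq : a < q) (d : ℕ) (hd : d < 2 * q) :
    (∀ i : ℕ, i < q - a →
        Ff (q : ℤ) (r : ℤ) ((d : ℤ) + i + 1) = Ff (q : ℤ) (r : ℤ) ((a : ℤ) + i + 1))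
      ↔ (d = a ∨ d = q + a) := by
  have hq' : (0 : ℤ) < (q : ℤ) := by exact_mod_cast hq
  constructor
  · intro H
    rcases Nat.lt_or_ge q 2 with hq1 | hq2
    · -- q = 1, a = 0, d < 2
      omega
    have hq2' : (2 : ℤ) ≤ (q : ℤ) := by exact_mod_cast hq2
    have ha' : (a * r) % q = 1 := by rwa [Nat.mod_eq_of_lt hq2] at ha
    have hr1 : 1 ≤ r := by
      rcases Nat.eq_zero_or_pos r with h | h
      · subst h; rw [Nat.coprime_zero_left] at hco; omega
      · exact h
    have h0r : (0 : ℤ) ≤ (r : ℤ) := by positivity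
    have hrq' : (r : ℤ) < (q : ℤ) := by exact_mod_cast hrq
    have hk : (a : ℤ) * r = q * ((a * r / q : ℕ) : ℤ) + 1 := by
      have h := Nat.div_add_mod (a * r) q
      rw [ha'] at h
      push_cast
      exact_mod_cast h.symm
    set κ : ℤ := ((a * r / q : ℕ) : ℤ) with hκ
    have hsum := Ff_sum (q : ℤ) (r : ℤ) hq' h0r hrq' (d : ℤ) (a : ℤ) (q - a) H
    have hba : ((a : ℤ) * r - 1) % q = 0 :=
      emod_eq_of _ κ 0 (by linear_combination hk) le_rfl hq'
    have hcast : (((q - a : ℕ)) : ℤ) = (q : ℤ) - (a : ℤ) := by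
      have : a ≤ q := by omega
      push_cast [this]; ring
    have hbr : (((q - a : ℕ)) : ℤ) * r = q * ((r : ℤ) - κ - 1) + (q - 1) := by
      rw [hcast]; linear_combination -hk
    have hrhs : (((a : ℤ) * r - 1) % q + ((q - a : ℕ) : ℤ) * r) / q = (r : ℤ) - κ - 1 :=
      ediv_eq_of _ _ ((q : ℤ) - 1) (by rw [hba]; linear_combination hbr) (by omega) (by omega)
    have hb1 : 0 ≤ ((d : ℤ) * r - 1) % q := Int.emod_nonneg _ (by omega)
    have hb2 : ((d : ℤ) * r - 1) % q < q := Int.emod_lt_of_pos _ hq'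
    by_cases hbd : ((d : ℤ) * r - 1) % q = 0
    · -- d*r ≡ 1 ≡ a*r mod q  ⇒  q ∣ d - a
      have hdd := Int.mul_ediv_add_emod ((d : ℤ) * r - 1) (q : ℤ)
      rw [hbd] at hdd
      have hdvd : (q : ℤ) ∣ ((d : ℤ) - a) * r :=
        ⟨((d : ℤ) * r - 1) / q - κ, by linear_combination -hdd - hk⟩
      have hcop : IsCoprime ((q : ℤ)) ((r : ℤ)) := Nat.isCoprime_iff_coprime.mpr hco.symm
      have hqd : (q : ℤ) ∣ ((d : ℤ) - a) := hcop.dvd_of_dvd_mul_right hdvd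
      obtain ⟨c, hc⟩ := hqd
      have hclt : c < 2 := by
        have h1 : (q : ℤ) * c < (q : ℤ) * 2 := by
          have : (q : ℤ) * c = (d : ℤ) - a := hc.symm
          omega
        exact lt_of_mul_lt_mul_left h1 (by omega)
      have hcgt : -1 < c := by
        have h1 : (q : ℤ) * (-1) < (q : ℤ) * c := by
          have : (q : ℤ) * c = (d : ℤ) - a := hc.symm
          omega
        exact lt_of_mul_lt_mul_left h1 (by omega)
      interval_cases c
      · left
        rw [mul_zero] at hc
        omega
      · right
        rw [mul_one] at hc
        omega
    · exfalso
      have hlhs : (((d : ℤ) * r - 1) % q + ((q - a : ℕ) : ℤ) * r) / q =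
          (r : ℤ) - κ := by
        refine ediv_eq_of _ _ (((d : ℤ) * r - 1) % q - 1) ?_ (by omega) (by omega)
        linear_combination hbr
      rw [hsum, hrhs] at hlhs
      omega
  · intro hcase i hi
    rcases hcase with rfl | h2
    · rfl
    · rw [h2]
      have h0r : (0 : ℤ) ≤ (r : ℤ) := by positivity
      have hrq' : (r : ℤ) < (q : ℤ) := by exact_mod_cast hrq
      apply Ff_congr (q : ℤ) (r : ℤ) hq' h0r hrq'
      rw [show (((q + a : ℕ) : ℤ)) + i + 1 = ((a : ℤ) + i + 1) + q * 1 by push_cast; ring,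
        Int.add_mul_emod_self_left]


end SAux

theorem stmt16 (p q : ℕ) (hp : 0 < p) (hq : 0 < q) (hpq : Nat.Coprime p q)
    (m : ℕ) (hm : m = p / q)
    (L : List ℤ) (hL : L = List.ofFn (fun i : Fin (2 * q) => sSeq p q ((i : ℕ) + 1))) :
    ∃ A B : List ℤ,
      L = A ++ B ++ A ++ B ∧
      A.reverse = A ∧ B.reverse = B ∧
      (B ≠ [] ∧ B.head? = some (m : ℤ) ∧ B.getLast? = some (m : ℤ)) ∧
      (q = 1 → A = []) ∧
      (2 ≤ q → A ≠ [] ∧ A.head? = some ((m : ℤ) + 1) ∧ A.getLast? = some ((m : ℤ) + 1)) ∧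
      ((Finset.range (2 * q)).filter (fun d => (L.rotate d).take B.length = B)).card = 2 ∧
      (A ≠ [] →
        ((Finset.range (2 * q)).filter (fun d => (L.rotate d).take A.length = A)).card = 2) := by
  subst hL
  set r : ℕ := p % q with hrdef
  have hrq : r < q := Nat.mod_lt _ hq
  have hco : Nat.Coprime r q := by
    have h := Nat.coprime_comm.mp hpq
    rw [Nat.Coprime] at h ⊢
    rw [hrdef, ← Nat.gcd_rec q p]
    exact h
  have hpr : (p : ℤ) = q * m + r := by
    rw [hm, hrdef]
    exact_mod_cast (Nat.div_add_mod p q).symm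
  haveI : NeZero q := ⟨hq.ne'⟩
  set a : ℕ := ((r : ZMod q)⁻¹).val with hadef
  have haq : a < q := ZMod.val_lt _
  have ha : (a * r) % q = 1 % q := by
    have h1 : ((a : ℕ) : ZMod q) = (r : ZMod q)⁻¹ := ZMod.natCast_zmod_val _
    have h2 : ((a * r : ℕ) : ZMod q) = ((1 : ℕ) : ZMod q) := by
      push_cast
      rw [h1, mul_comm ((r : ZMod q)⁻¹) (r : ZMod q), ZMod.coe_mul_inv_eq_one r hco]
    exact (ZMod.natCast_eq_natCast_iff _ _ _).mp h2
  have hq' : (0 : ℤ) < (q : ℤ) := by exact_mod_cast hq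
  have h0r : (0 : ℤ) ≤ (r : ℤ) := by positivity
  have hrq' : (r : ℤ) < (q : ℤ) := by exact_mod_cast hrq
  have haZ : ((a : ℤ) * r) % q = 1 % q := by
    have h3 : (((a * r) % q : ℕ) : ℤ) = ((1 % q : ℕ) : ℤ) := by exact_mod_cast ha
    push_cast at h3
    exact h3
  have key : ∀ j : ℤ, sSeq p q j = (m : ℤ) + SAux.Ff (q : ℤ) (r : ℤ) j :=
    SAux.sSeq_eq_F p q m r hq hpr
  have scongr : ∀ j k : ℤ, j % q = k % q → sSeq p q j = sSeq p q k := by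
    intro j k h
    rw [key, key, SAux.Ff_congr _ _ hq' h0r hrq' h]
  have sper : ∀ j : ℤ, sSeq p q (j + q) = sSeq p q j := by
    intro j
    apply scongr
    rw [show j + (q : ℤ) = j + q * 1 by ring, Int.add_mul_emod_self_left]
  have spal : ∀ j : ℤ, sSeq p q ((a : ℤ) + 1 - j) = sSeq p q j := by
    intro j
    rw [key, key, SAux.Ff_palin _ _ _ hq' h0r hrq' haZ]
  have hr1 : 2 ≤ q → 1 ≤ r := by
    intro hq2
    rcases Nat.eq_zero_or_pos r with h | h
    · exfalso; rw [h, Nat.coprime_zero_left] at hco; omega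
    · exact h
  set b : ℕ := q - a with hbdef
  have hab : a + b = q := by omega
  set A : List ℤ := List.ofFn (fun i : Fin a => sSeq p q ((i : ℕ) + 1)) with hA
  set B : List ℤ := List.ofFn (fun i : Fin b => sSeq p q ((a : ℤ) + (i : ℕ) + 1)) with hB
  have lenA : A.length = a := List.length_ofFn
  have lenB : B.length = b := List.length_ofFn
  -- palindromes
  have hArev : A.reverse = A := by
    apply List.ext_getElem
    · simp
    · intro n h1 h2
      rw [List.length_reverse, lenA] at h1
      rw [List.getElem_reverse]
      simp only [hA, List.getElem_ofFn, List.length_ofFn]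
      rw [← spal ((n : ℤ) + 1)]
      have e : ((a - 1 - n : ℕ) : ℤ) + 1 = (a : ℤ) + 1 - ((n : ℤ) + 1) := by omega
      rw [e]
  have hBrev : B.reverse = B := by
    apply List.ext_getElem
    · simp
    · intro n h1 h2
      rw [List.length_reverse, lenB] at h1
      rw [List.getElem_reverse]
      simp only [hB, List.getElem_ofFn, List.length_ofFn]
      have e : (a : ℤ) + ((b - 1 - n : ℕ) : ℤ) + 1
          = ((a : ℤ) + 1 - ((a : ℤ) + (n : ℤ) + 1)) + (q : ℤ) := by omega
      rw [e, sper, spal]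
  -- the full word
  have hsplit : List.ofFn (fun i : Fin (2 * q) => sSeq p q ((i : ℕ) + 1))
      = A ++ B ++ A ++ B := by
    apply List.ext_getElem
    · simp [lenA, lenB]; omega
    · intro n h1 h2
      rw [List.length_ofFn] at h1
      rw [List.getElem_ofFn]
      simp only [List.getElem_append, lenA, lenB, List.length_append, hA, hB,
        List.getElem_ofFn, List.length_ofFn]
      split_ifs with w1 w2 w3
      · rfl
      · have e : (a : ℤ) + ((n - a : ℕ) : ℤ) + 1 = (n : ℤ) + 1 := by omega
        rw [e]
      · rw [← sper (((n - (a + b) : ℕ) : ℤ) + 1)]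
        have e : ((n - (a + b) : ℕ) : ℤ) + 1 + (q : ℤ) = (n : ℤ) + 1 := by omega
        rw [e]
      · rw [← sper ((a : ℤ) + ((n - (a + b + a) : ℕ) : ℤ) + 1)]
        have e : (a : ℤ) + ((n - (a + b + a) : ℕ) : ℤ) + 1 + (q : ℤ) = (n : ℤ) + 1 := by
          omega
        rw [e]
  -- heads
  have hBne : B ≠ [] := List.ne_nil_of_length_pos (by omega)
  have hBhead : B.head? = some (m : ℤ) := by
    rw [List.head?_eq_getElem?, List.getElem?_eq_getElem (by omega)]
    simp only [hB, List.getElem_ofFn]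
    have e : sSeq p q ((a : ℤ) + ((0 : ℕ) : ℤ) + 1) = (m : ℤ) := by
      rw [show (a : ℤ) + ((0 : ℕ) : ℤ) + 1 = (a : ℤ) + 1 by norm_num, key,
        SAux.Ff_head0 _ _ _ hq' h0r hrq' haZ, add_zero]
    exact congrArg some e
  have hBlast : B.getLast? = some (m : ℤ) := by
    rw [← List.head?_reverse, hBrev, hBhead]
  -- occurrence bridge
  have heart : ∀ (s : ℤ) (i d : ℕ), d < 2 * q →
      (sSeq p q ((((i + d) % (2 * q) : ℕ) : ℤ) + 1) = sSeq p q (s + (i : ℤ) + 1)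
       ↔ SAux.Ff (q : ℤ) (r : ℤ) ((d : ℤ) + i + 1) = SAux.Ff (q : ℤ) (r : ℤ) (s + (i : ℤ) + 1)) := by
    intro s i d hd
    have hmod : sSeq p q ((((i + d) % (2 * q) : ℕ) : ℤ) + 1) = sSeq p q ((d : ℤ) + i + 1) := by
      apply scongr
      obtain ⟨c, hc⟩ : ∃ c, i + d = 2 * q * c + (i + d) % (2 * q) :=
        ⟨(i + d) / (2 * q), (Nat.div_add_mod _ _).symm⟩
      have e : ((d : ℤ) + i + 1) = ((((i + d) % (2 * q) : ℕ) : ℤ) + 1) + (q : ℤ) * (2 * c) := by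
        push_cast at hc ⊢
        linarith
      rw [e, Int.add_mul_emod_self_left]
    rw [hmod, key, key]
    constructor <;> intro h <;> linarith
  have hbridge : ∀ (s : ℤ) (len : ℕ) (X : List ℤ),
      X = List.ofFn (fun i : Fin len => sSeq p q (s + (i : ℕ) + 1)) → len ≤ q →
      ∀ d : ℕ, d < 2 * q →
      (((List.ofFn (fun i : Fin (2 * q) => sSeq p q ((i : ℕ) + 1))).rotate d).take len = X
       ↔ ∀ i : ℕ, i < len →
          SAux.Ff (q : ℤ) (r : ℤ) ((d : ℤ) + i + 1) = SAux.Ff (q : ℤ) (r : ℤ) (s + (i : ℤ) + 1)) := by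
    intro s len X hX hlen d hd
    subst hX
    constructor
    · intro hEq i hi
      have hl : i < (((List.ofFn (fun i : Fin (2 * q) => sSeq p q ((i : ℕ) + 1))).rotate d).take len).length := by
        simp [List.length_take, List.length_rotate, List.length_ofFn]
        omega
      have h := List.getElem_of_eq hEq hl
      rw [List.getElem_take, List.getElem_rotate, List.getElem_ofFn, List.getElem_ofFn] at h
      simp only [List.length_ofFn] at h
      exact (heart s i d hd).mp h
    · intro H
      apply List.ext_getElem
      · simp [List.length_take, List.length_rotate, List.length_ofFn]
        omega
      · intro n h1 h2
        rw [List.length_ofFn] at h2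
        rw [List.getElem_take, List.getElem_rotate, List.getElem_ofFn, List.getElem_ofFn]
        simp only [List.length_ofFn]
        exact (heart s n d hd).mpr (H n h2)
  -- counting for B
  have hcondB : ∀ d : ℕ, d < 2 * q →
      (((List.ofFn (fun i : Fin (2 * q) => sSeq p q ((i : ℕ) + 1))).rotate d).take B.length = B
        ↔ (d = a ∨ d = q + a)) := by
    intro d hd
    rw [lenB]
    rw [hbridge (a : ℤ) b B hB (by omega) d hd]
    exact SAux.occB q r a hq hco hrq ha haq d hd
  have hcardB : ((Finset.range (2 * q)).filter
      (fun d => (((List.ofFn (fun i : Fin (2 * q) => sSeq p q ((i : ℕ) + 1))).rotate d).take B.length = B))).card = 2 := by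
    have hset : (Finset.range (2 * q)).filter
        (fun d => (((List.ofFn (fun i : Fin (2 * q) => sSeq p q ((i : ℕ) + 1))).rotate d).take B.length = B))
        = ({a, q + a} : Finset ℕ) := by
      ext x
      simp only [Finset.mem_filter, Finset.mem_range, Finset.mem_insert, Finset.mem_singleton]
      constructor
      · rintro ⟨hx, hPx⟩
        exact (hcondB x hx).mp hPx
      · rintro (h2 | h2)
        · exact ⟨by omega, (hcondB x (by omega)).mpr (Or.inl h2)⟩
        · exact ⟨by omega, (hcondB x (by omega)).mpr (Or.inr h2)⟩
    rw [hset, Finset.card_insert_of_notMem (by simp; omega), Finset.card_singleton]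
  -- assemble
  refine ⟨A, B, hsplit, hArev, hBrev, ⟨hBne, hBhead, hBlast⟩, ?_, ?_, hcardB, ?_⟩
  · intro h1
    have : a = 0 := by omega
    apply List.length_eq_zero_iff.mp
    rw [lenA, this]
  · intro hq2
    have ha1 : 1 ≤ a := by
      by_contra h
      have h0 : a = 0 := by omega
      rw [h0, Nat.zero_mul, Nat.zero_mod, Nat.mod_eq_of_lt (by omega)] at ha
      omega
    have hAne : A ≠ [] := List.ne_nil_of_length_pos (by omega)
    have hAhead : A.head? = some ((m : ℤ) + 1) := by
      rw [List.head?_eq_getElem?, List.getElem?_eq_getElem (by omega)]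
      simp only [hA, List.getElem_ofFn]
      have e : sSeq p q (((0 : ℕ) : ℤ) + 1) = (m : ℤ) + 1 := by
        rw [show ((0 : ℕ) : ℤ) + 1 = (1 : ℤ) by norm_num, key,
          SAux.Ff_one _ _ hq' (by exact_mod_cast hr1 hq2) hrq']
      exact congrArg some e
    have hAlast : A.getLast? = some ((m : ℤ) + 1) := by
      rw [← List.head?_reverse, hArev, hAhead]
    exact ⟨hAne, hAhead, hAlast⟩
  · intro hAne
    have ha1 : 1 ≤ a := by
      by_contra h
      have h0 : a = 0 := by omega
      apply hAne
      apply List.length_eq_zero_iff.mp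
      rw [lenA, h0]
    have hq2 : 2 ≤ q := by omega
    have ha' : (a * r) % q = 1 := by
      rw [Nat.mod_eq_of_lt (show (1 : ℕ) < q by omega)] at ha
      exact ha
    have hcondA : ∀ d : ℕ, d < 2 * q →
        (((List.ofFn (fun i : Fin (2 * q) => sSeq p q ((i : ℕ) + 1))).rotate d).take A.length = A
          ↔ (d = 0 ∨ d = q)) := by
      intro d hd
      rw [lenA]
      have hA0 : A = List.ofFn (fun i : Fin a => sSeq p q ((0 : ℤ) + (i : ℕ) + 1)) := by
        rw [hA]
        congr 1
        funext i
        norm_num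
      rw [hbridge (0 : ℤ) a A hA0 (by omega) d hd]
      constructor
      · intro H
        apply (SAux.occA q r a hq2 hco hrq ha' haq d hd).mp
        intro i hi
        rw [show ((i : ℤ) + 1) = ((0 : ℤ) + i + 1) by ring]
        exact H i hi
      · intro hcase i hi
        rw [show ((0 : ℤ) + (i : ℤ) + 1) = ((i : ℤ) + 1) by ring]
        exact (SAux.occA q r a hq2 hco hrq ha' haq d hd).mpr hcase i hi
    have hset : (Finset.range (2 * q)).filter
        (fun d => (((List.ofFn (fun i : Fin (2 * q) => sSeq p q ((i : ℕ) + 1))).rotate d).take A.length = A))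
        = ({0, q} : Finset ℕ) := by
      ext x
      simp only [Finset.mem_filter, Finset.mem_range, Finset.mem_insert, Finset.mem_singleton]
      constructor
      · rintro ⟨hx, hPx⟩
        exact (hcondA x hx).mp hPx
      · rintro (h2 | h2)
        · exact ⟨by omega, (hcondA x (by omega)).mpr (Or.inl h2)⟩
        · exact ⟨by omega, (hcondA x (by omega)).mpr (Or.inr h2)⟩
    rw [hset, Finset.card_insert_of_notMem (by simp; omega), Finset.card_singleton]
end
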